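/- arXiv:2406.05748 — 3 statements merged into one kernel-verified Lean document; each statement's English description precedes it below -/
import Mathlib

section
/- Let r ≥ 2, let Γ : 𝔊^r → ℝ be a symmetrization-increasing map, and let 𝔥 be a family of r-graphs such that Γ is symmetrized-stable with respect to 𝔥. Then for every n ∈ ℕ with ex_Γ(n) > 0, ex_Γ(n) = max{Γ(H) : H ∈ 𝔥 and v(H) = n}. -/
open Finset

attribute [local instance 10] Classical.propDecidable

noncomputable section

/-- An `r`-uniform hypergraph on a finite set of vertices labeled by natural numbers:
a finite collection of `r`-element subsets of the vertex set. -/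
structure RGraph (r : ℕ) where
  verts : Finset ℕ
  edges : Finset (Finset ℕ)
  edge_card : ∀ e ∈ edges, e.card = r
  edge_sub : ∀ e ∈ edges, e ⊆ verts

namespace RGraph

variable {r : ℕ}

/-- number of vertices -/
def nv (H : RGraph r) : ℕ := H.verts.card

/-- delete a set of vertices (and all edges meeting it) -/
def deleteVerts (H : RGraph r) (S : Finset ℕ) : RGraph r where
  verts := H.verts \ S
  edges := H.edges.filter fun e => ∀ v ∈ S, v ∉ e
  edge_card := fun e he => H.edge_card e (Finset.mem_filter.1 he).1
  edge_sub := by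
    intro e he x hx
    rcases Finset.mem_filter.1 he with ⟨he1, he2⟩
    exact Finset.mem_sdiff.2 ⟨H.edge_sub e he1 hx, fun hxS => he2 x hxS hx⟩

/-- delete a single vertex -/
def deleteVert (H : RGraph r) (v : ℕ) : RGraph r := H.deleteVerts {v}

/-- induced subgraph on a set of vertices -/
def induce (H : RGraph r) (U : Finset ℕ) : RGraph r where
  verts := H.verts ∩ U
  edges := H.edges.filter fun e => e ⊆ U
  edge_card := fun e he => H.edge_card e (Finset.mem_filter.1 he).1
  edge_sub := fun e he x hx => Finset.mem_inter.2
    ⟨H.edge_sub e (Finset.mem_filter.1 he).1 hx, (Finset.mem_filter.1 he).2 hx⟩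

/-- delete a single edge -/
def deleteEdge (H : RGraph r) (e : Finset ℕ) : RGraph r where
  verts := H.verts
  edges := H.edges.erase e
  edge_card := fun f hf => H.edge_card f (Finset.mem_of_mem_erase hf)
  edge_sub := fun f hf => H.edge_sub f (Finset.mem_of_mem_erase hf)

/-- subgraph relation (may omit vertices and edges) -/
def IsSubgraph (H' H : RGraph r) : Prop := H'.verts ⊆ H.verts ∧ H'.edges ⊆ H.edges

/-- the link of a vertex -/
def link (H : RGraph r) (v : ℕ) : Finset (Finset ℕ) :=
  (H.edges.filter fun e => v ∈ e).image fun e => e.erase v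

/-- a pair of vertices is uncovered if no edge contains both -/
def Uncovered (H : RGraph r) (u v : ℕ) : Prop := ∀ e ∈ H.edges, ¬(u ∈ e ∧ v ∈ e)

/-- `H.symmetrize u v` is `H_{u → v}`: delete all edges containing `u` and add
`{u} ∪ e` for every `e` in the link of `v`. -/
def symmetrize (H : RGraph r) (u v : ℕ) : RGraph r where
  verts := insert u H.verts
  edges := (H.edges.filter fun e => u ∉ e) ∪
    ((H.edges.filter fun e => v ∈ e ∧ u ∉ e ∧ u ≠ v).image fun e => insert u (e.erase v))
  edge_card := by
    intro e he
    rcases Finset.mem_union.1 he with he | he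
    · exact H.edge_card e (Finset.mem_filter.1 he).1
    · rcases Finset.mem_image.1 he with ⟨f, hf, rfl⟩
      rcases Finset.mem_filter.1 hf with ⟨hf1, hv, hu, -⟩
      have h1 : u ∉ f.erase v := fun h => hu (Finset.mem_of_mem_erase h)
      have hfc := H.edge_card f hf1
      have hr1 : 0 < r := hfc ▸ Finset.card_pos.2 ⟨v, hv⟩
      rw [Finset.card_insert_of_notMem h1, Finset.card_erase_of_mem hv, hfc]
      omega
  edge_sub := by
    intro e he x hx
    rcases Finset.mem_union.1 he with he | he
    · exact Finset.mem_insert_of_mem (H.edge_sub e (Finset.mem_filter.1 he).1 hx)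
    · rcases Finset.mem_image.1 he with ⟨f, hf, rfl⟩
      rcases Finset.mem_insert.1 hx with rfl | hx
      · exact Finset.mem_insert_self _ _
      · exact Finset.mem_insert_of_mem
          (H.edge_sub f (Finset.mem_filter.1 hf).1 (Finset.mem_of_mem_erase hx))

/-- `H` is symmetrized if every uncovered pair of (distinct) vertices is equivalent,
i.e. has equal links. -/
def Symmetrized (H : RGraph r) : Prop :=
  ∀ u ∈ H.verts, ∀ v ∈ H.verts, u ≠ v → H.Uncovered u v → H.link u = H.link v

/-- neighbourhood of a vertex: all vertices sharing an edge with `v` -/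
def nbhd (H : RGraph r) (v : ℕ) : Finset ℕ :=
  H.verts.filter fun u => ∃ e ∈ H.edges, u ∈ e ∧ v ∈ e

/-- the link of a pair of vertices -/
def pairLink (H : RGraph r) (u v : ℕ) : Finset (Finset ℕ) :=
  (H.edges.filter fun e => u ∈ e ∧ v ∈ e).image fun e => (e.erase u).erase v

/-- `N_H^k(v)`: for `r ≥ 3`, the set of vertices `u` whose pair-link with `v`
contains at least `k` pairwise disjoint `(r-2)`-sets; for `r = 2`, the neighbourhood. -/
def bigNbhd (H : RGraph r) (k v : ℕ) : Finset ℕ :=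
  if r = 2 then H.nbhd v
  else H.verts.filter fun u => ∃ A ∈ (H.pairLink u v).powerset,
    k ≤ A.card ∧ ∀ a ∈ A, ∀ b ∈ A, a ≠ b → a ∩ b = ∅

/-- number of edges containing a vertex -/
def edeg (H : RGraph r) (v : ℕ) : ℕ := (H.edges.filter fun e => v ∈ e).card

end RGraph

/-! ## The Γ-framework -/

/-- `Γ`-degree of a vertex -/
def gdeg {r : ℕ} (Γ : RGraph r → ℝ) (H : RGraph r) (v : ℕ) : ℝ :=
  Γ H - Γ (H.deleteVert v)

/-- the extremal number `ex_Γ(n)` -/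
def exG {r : ℕ} (Γ : RGraph r → ℝ) (n : ℕ) : ℝ :=
  sSup {x | ∃ H : RGraph r, H.nv = n ∧ Γ H = x}

/-- the extremal average degree `exdeg_Γ(n) = k ⬝ ex_Γ(n) / n` -/
def exdeg {r : ℕ} (Γ : RGraph r → ℝ) (k : ℝ) (n : ℕ) : ℝ :=
  k * exG Γ n / n

/-- `Γ` is `k`-uniform -/
def IsUniform {r : ℕ} (Γ : RGraph r → ℝ) (k : ℝ) : Prop :=
  ∃ h : ℕ → ℝ, Filter.Tendsto (fun n => h n / exG Γ n) Filter.atTop (nhds 0) ∧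
    ∀ H : RGraph r, 0 < Γ H → |(∑ v ∈ H.verts, gdeg Γ H v) - k * Γ H| ≤ h H.nv

/-- `Γ` is `(δ*, c*, C*)`-smooth -/
def IsSmooth {r : ℕ} (Γ : RGraph r → ℝ) (k δs cs Cs : ℝ) : Prop :=
  ∃ h : ℕ → ℝ, Filter.Tendsto (fun n => h n / exG Γ n) Filter.atTop (nhds 0) ∧
    ∀ (n : ℕ) (δ : ℝ), 0 ≤ δ → δ ≤ δs → ∀ m : ℕ, (m : ℝ) = δ * n →
      exG Γ (n - m) ≤ exG Γ n - δ * k * exG Γ n + Cs * δ ^ (1 + cs) * exG Γ n + h n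

/-- `Γ` is locally `C`-Lipschitz -/
def IsLocallyLipschitz {r : ℕ} (Γ : RGraph r → ℝ) (k C : ℝ) : Prop :=
  ∃ h : ℕ → ℝ, Filter.Tendsto (fun n => h n / exdeg Γ k n) Filter.atTop (nhds 0) ∧
    ∀ (n : ℕ) (H : RGraph r), H.nv = n → 0 < Γ H → ∀ U ⊆ H.verts, ∀ v ∈ U,
      gdeg Γ H v - C * (((n : ℝ) - U.card) / n) * exdeg Γ k n - h n
        ≤ gdeg Γ (H.induce U) v

/-- `Γ` is continuous -/
def GammaContinuous {r : ℕ} (Γ : RGraph r → ℝ) : Prop :=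
  ∀ ε : ℝ, 0 < ε → ∃ δ : ℝ, 0 < δ ∧ ∃ N₀ : ℕ, ∀ n ≥ N₀, ∀ H H' : RGraph r,
    H.nv = n → H'.verts = H.verts → H'.edges ⊆ H.edges →
    (H.edges.card : ℝ) - δ * (n : ℝ) ^ r ≤ (H'.edges.card : ℝ) →
    Γ H - ε * exG Γ n ≤ Γ H'

/-- `Γ` is locally monotone -/
def IsLocallyMonotone {r : ℕ} (Γ : RGraph r → ℝ) : Prop :=
  ∀ H H' : RGraph r, 0 < Γ H → H'.IsSubgraph H → ∀ v ∈ H'.verts,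
    gdeg Γ H' v ≤ gdeg Γ H v

/-- a hereditary family of `r`-graphs -/
def Hereditary {r : ℕ} (ℌ : Set (RGraph r)) : Prop :=
  ∀ H ∈ ℌ, ∀ H' : RGraph r, H'.IsSubgraph H → H' ∈ ℌ

/-- `Γ` is symmetrization-increasing -/
def SymmetrizationIncreasing {r : ℕ} (Γ : RGraph r → ℝ) : Prop :=
  ∀ H : RGraph r, ∀ u ∈ H.verts, ∀ v ∈ H.verts, u ≠ v → H.Uncovered u v →
    Γ H < max (Γ (H.symmetrize u v)) (Γ (H.symmetrize v u)) ∨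
      (Γ H = Γ (H.symmetrize u v) ∧ Γ H = Γ (H.symmetrize v u))

/-- `Γ` is symmetrized-stable with respect to `ℌ` -/
def SymmetrizedStable {r : ℕ} (Γ : RGraph r → ℝ) (ℌ : Set (RGraph r)) : Prop :=
  ∀ H : RGraph r, H.Symmetrized → 0 < Γ H → H ∈ ℌ

/-- `Γ` is `(ε, N₀)`-vertex-extendable with respect to `ℌ` -/
def VertexExtendable {r : ℕ} (Γ : RGraph r → ℝ) (k : ℝ) (ℌ : Set (RGraph r))
    (ε : ℝ) (N₀ : ℕ) : Prop :=
  ∀ n ≥ N₀, ∀ H : RGraph r, H.nv = n →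
    (∀ v ∈ H.verts, (1 - ε) * exdeg Γ k n ≤ gdeg Γ H v) →
    (∃ v ∈ H.verts, H.deleteVert v ∈ ℌ) → H ∈ ℌ

/-- `Γ` is degree-stable with respect to `ℌ` -/
def DegreeStable {r : ℕ} (Γ : RGraph r → ℝ) (k : ℝ) (ℌ : Set (RGraph r)) : Prop :=
  ∃ ε : ℝ, 0 < ε ∧ ∃ N₀ : ℕ, ∀ n ≥ N₀, ∀ H : RGraph r, H.nv = n →
    (∀ v ∈ H.verts, (1 - ε) * exdeg Γ k n ≤ gdeg Γ H v) → H ∈ ℌ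

/-- `Γ` is edge-stable with respect to `ℌ` -/
def EdgeStableG {r : ℕ} (Γ : RGraph r → ℝ) (ℌ : Set (RGraph r)) : Prop :=
  ∀ ε : ℝ, 0 < ε → ∃ δ : ℝ, 0 < δ ∧ ∃ N₀ : ℕ, ∀ n ≥ N₀, ∀ H : RGraph r, H.nv = n →
    (1 - δ) * exG Γ n ≤ Γ H →
    ∃ H' : RGraph r, H'.verts = H.verts ∧ H'.edges ⊆ H.edges ∧
      ((H.edges \ H'.edges).card : ℝ) ≤ ε * (n : ℝ) ^ r ∧ H' ∈ ℌ

/-- `Γh` is a trajectory of `Γ` -/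
def IsTrajectoryOf {r : ℕ} (Γh Γ : RGraph r → ℝ) : Prop :=
  (∃ f : ℕ → ℝ, Filter.Tendsto (fun n => f n / exG Γh n) Filter.atTop (nhds 0) ∧
    ∀ n : ℕ, exG Γh n - f n ≤ exG Γ n) ∧
  ∃ g h : ℕ → ℝ,
    Filter.Tendsto (fun n => g n / (n : ℝ) ^ r) Filter.atTop (nhds 0) ∧
    Filter.Tendsto (fun n => h n / exG Γ n) Filter.atTop (nhds 0) ∧
    ∀ H : RGraph r, 0 < Γ H → ∃ H' : RGraph r, H'.IsSubgraph H ∧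
      (H.edges.card : ℝ) - g H.nv ≤ (H'.edges.card : ℝ) ∧ Γ H - h H.nv ≤ Γh H'

/-! ## Counting injective homomorphisms -/

/-- The set of injective homomorphisms from `Q` to `H`, encoded as maps `ℕ → ℕ`
which are the identity outside `Q.verts`. -/
def injHoms {r : ℕ} (Q H : RGraph r) : Set (ℕ → ℕ) :=
  {φ | Set.InjOn φ ↑Q.verts ∧ Set.MapsTo φ ↑Q.verts ↑H.verts ∧
    (∀ e ∈ Q.edges, e.image φ ∈ H.edges) ∧ ∀ x, x ∉ Q.verts → φ x = x}

/-- `inj(Q, H)`: the number of injective homomorphisms from `Q` to `H` -/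
def injc {r : ℕ} (Q H : RGraph r) : ℕ := (injHoms Q H).ncard

/-- `d_{Q,H}(v)`: the number of injective homomorphisms from `Q` to `H`
whose image contains `v` -/
def qdeg {r : ℕ} (Q H : RGraph r) (v : ℕ) : ℕ :=
  {φ ∈ injHoms Q H | ∃ x ∈ Q.verts, φ x = v}.ncard

/-- `H` is `F₀`-free: `F₀` is not (isomorphic to) a subgraph of `H` -/
def FreeOf {r : ℕ} (F₀ H : RGraph r) : Prop := injHoms F₀ H = ∅

/-- `Q` has no isolated vertices -/
def NoIsolated {r : ℕ} (Q : RGraph r) : Prop := ∀ v ∈ Q.verts, ∃ e ∈ Q.edges, v ∈ e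

/-- `H` is `ℓ`-partite (equivalently, `K_ℓ^r`-colorable) -/
def IsPartite {r : ℕ} (H : RGraph r) (ℓ : ℕ) : Prop :=
  ∃ c : ℕ → ℕ, (∀ v ∈ H.verts, c v < ℓ) ∧
    ∀ e ∈ H.edges, ∀ a ∈ e, ∀ b ∈ e, c a = c b → a = b

/-- chromatic number of an `r`-graph -/
def chrNum {r : ℕ} (H : RGraph r) : ℕ := sInf {ℓ | IsPartite H ℓ}

/-- a graph is edge-critical if deleting some edge lowers its chromatic number -/
def EdgeCritical (F : RGraph 2) : Prop :=
  ∃ e ∈ F.edges, chrNum (F.deleteEdge e) < chrNum F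

/-- an `r`-graph is `2`-covered if every pair of distinct vertices lies in an edge -/
def TwoCovered {r : ℕ} (G : RGraph r) : Prop :=
  ∀ u ∈ G.verts, ∀ v ∈ G.verts, u ≠ v → ∃ e ∈ G.edges, u ∈ e ∧ v ∈ e

/-- `Q` is a blowup (with nonempty parts) of `G` -/
def IsBlowupOf {r : ℕ} (Q G : RGraph r) : Prop :=
  ∃ p : ℕ → ℕ, Set.MapsTo p ↑Q.verts ↑G.verts ∧ Set.SurjOn p ↑Q.verts ↑G.verts ∧
    ∀ e : Finset ℕ, e ⊆ Q.verts → e.card = r →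
      (e ∈ Q.edges ↔ (Set.InjOn p ↑e ∧ e.image p ∈ G.edges))

/-- the shadow `∂_{r-2} G`: the graph of all pairs of vertices covered by an edge -/
def shadow2 {r : ℕ} (G : RGraph r) : RGraph 2 where
  verts := G.verts
  edges := (G.verts.powersetCard 2).filter fun e => ∃ E ∈ G.edges, e ⊆ E
  edge_card := fun e he => (Finset.mem_powersetCard.1 (Finset.mem_filter.1 he).1).2
  edge_sub := fun e he => (Finset.mem_powersetCard.1 (Finset.mem_filter.1 he).1).1

/-- the complete `r`-graph `K_ℓ^r` on vertex set `{0, …, ℓ-1}` -/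
def completeRG (r ℓ : ℕ) : RGraph r where
  verts := Finset.range ℓ
  edges := (Finset.range ℓ).powersetCard r
  edge_card := fun e he => (Finset.mem_powersetCard.1 he).2
  edge_sub := fun e he => (Finset.mem_powersetCard.1 he).1

/-- the complete multipartite `r`-graph on `[n] = {0, …, n-1}` whose parts are the
fibres of the coloring `c`: edges are the rainbow `r`-sets. -/
def completePartite (r n : ℕ) (c : ℕ → ℕ) : RGraph r where
  verts := Finset.range n
  edges := ((Finset.range n).powersetCard r).filter fun e =>
    ∀ a ∈ e, ∀ b ∈ e, c a = c b → a = b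
  edge_card := fun e he => (Finset.mem_powersetCard.1 (Finset.mem_filter.1 he).1).2
  edge_sub := fun e he => (Finset.mem_powersetCard.1 (Finset.mem_filter.1 he).1).1

/-- the `5`-cycle `C₅` -/
def cycle5 : RGraph 2 where
  verts := Finset.range 5
  edges := {{0, 1}, {1, 2}, {2, 3}, {3, 4}, {4, 0}}
  edge_card := by decide
  edge_sub := by decide

/-- the set of (not necessarily injective) homomorphisms from `Q` to `G`,
encoded as maps `ℕ → ℕ` which are the identity outside `Q.verts` -/
def homsSet {r : ℕ} (Q G : RGraph r) : Set (ℕ → ℕ) :=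
  {φ | Set.MapsTo φ ↑Q.verts ↑G.verts ∧ (∀ e ∈ Q.edges, e.image φ ∈ G.edges) ∧
    ∀ x, x ∉ Q.verts → φ x = x}

/-- `E` is the `r`-uniform expansion `H_F^r` of the graph `F` -/
def IsExpansion (r : ℕ) (F : RGraph 2) (E : RGraph r) : Prop :=
  ∃ f : Finset ℕ → Finset ℕ,
    (∀ e ∈ F.edges, (f e).card = r - 2 ∧ Disjoint (f e) F.verts) ∧
    (∀ e ∈ F.edges, ∀ e' ∈ F.edges, e ≠ e' → Disjoint (f e) (f e')) ∧
    E.verts = F.verts ∪ F.edges.biUnion f ∧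
    E.edges = F.edges.image fun e => e ∪ f e

/-- `H` is `H_F^r`-free -/
def ExpansionFree (r : ℕ) (F : RGraph 2) (H : RGraph r) : Prop :=
  ∀ E : RGraph r, IsExpansion r F E → FreeOf E H

/-- `inj(n, Q, H_F^r)` -/
def injExExp (r : ℕ) (Q : RGraph r) (F : RGraph 2) (n : ℕ) : ℕ :=
  sSup {t | ∃ H : RGraph r, H.nv = n ∧ ExpansionFree r F H ∧ injc Q H = t}

/-- `inj(n, Q, F₀)` for a single forbidden `r`-graph `F₀` -/
def injExF {r : ℕ} (Q F₀ : RGraph r) (n : ℕ) : ℕ :=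
  sSup {t | ∃ H : RGraph r, H.nv = n ∧ FreeOf F₀ H ∧ injc Q H = t}

/-- max of `inj(Q, H)` over `ℓ`-partite `H` on `n` vertices -/
def injExPartite (r : ℕ) (Q : RGraph r) (ℓ n : ℕ) : ℕ :=
  sSup {t | ∃ H : RGraph r, H.nv = n ∧ IsPartite H ℓ ∧ injc Q H = t}

/-- `H` is a complete `ℓ`-partite `r`-graph (possibly with empty parts) -/
def IsCompleteMultipartite {r : ℕ} (H : RGraph r) (ℓ : ℕ) : Prop :=
  ∃ c : ℕ → ℕ, (∀ v ∈ H.verts, c v < ℓ) ∧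
    ∀ e : Finset ℕ, e ⊆ H.verts → e.card = r →
      ((∀ a ∈ e, ∀ b ∈ e, c a = c b → a = b) ↔ e ∈ H.edges)

/-- `H` is a complete `k`-partite `r`-graph with nonempty parts -/
def IsCompleteMultipartiteStrict {r : ℕ} (H : RGraph r) (k : ℕ) : Prop :=
  ∃ c : ℕ → ℕ, (∀ v ∈ H.verts, c v < k) ∧ (∀ i < k, ∃ v ∈ H.verts, c v = i) ∧
    ∀ e : Finset ℕ, e ⊆ H.verts → e.card = r →
      ((∀ a ∈ e, ∀ b ∈ e, c a = c b → a = b) ↔ e ∈ H.edges)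

/-- `T` is a balanced complete `ℓ`-partite `r`-graph (part sizes differ by at most one) -/
def IsBalancedCompleteMultipartite {r : ℕ} (T : RGraph r) (ℓ : ℕ) : Prop :=
  ∃ c : ℕ → ℕ, (∀ v ∈ T.verts, c v < ℓ) ∧
    (∀ i < ℓ, ∀ j < ℓ, (T.verts.filter fun v => c v = i).card
      ≤ (T.verts.filter fun v => c v = j).card + 1) ∧
    ∀ e : Finset ℕ, e ⊆ T.verts → e.card = r →
      ((∀ a ∈ e, ∀ b ∈ e, c a = c b → a = b) ↔ e ∈ T.edges)

/-- the `Q`-Lagrange polynomial of `G`, evaluated at a weight vector `x` -/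
def lagPoly {r : ℕ} (Q G : RGraph r) (x : ℕ → ℝ) : ℝ :=
  ∑ᶠ φ ∈ homsSet Q G, ∏ i ∈ Q.verts.image φ, x i

/-- the `Q`-Lagrangian of `G` -/
def lagrangian {r : ℕ} (Q G : RGraph r) : ℝ :=
  sSup {t | ∃ x : ℕ → ℝ, (∀ i, 0 ≤ x i) ∧ (∀ i, i ∉ G.verts → x i = 0) ∧
    (∑ i ∈ G.verts, x i) = 1 ∧ t = lagPoly Q G x}

/-- `W` is a weak expansion of the clique `K_m`: obtained from `K_m` by adding
`r - 2` new vertices to each edge, where the added sets may intersect each other -/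
def IsWeakCliqueExpansion (r m : ℕ) (W : RGraph r) : Prop :=
  ∃ (V : Finset ℕ) (f : Finset ℕ → Finset ℕ), V.card = m ∧
    (∀ e ∈ V.powersetCard 2, (f e).card = r - 2 ∧ Disjoint (f e) V) ∧
    W.verts = V ∪ (V.powersetCard 2).biUnion f ∧
    W.edges = (V.powersetCard 2).image fun e => e ∪ f e

/-- `H` is `𝒦_m^r`-free (contains no weak expansion of `K_m`) -/
def WeakExpFree (r m : ℕ) (H : RGraph r) : Prop :=
  ∀ W : RGraph r, IsWeakCliqueExpansion r m W → FreeOf W H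

/-- `inj(n, Q, 𝒦_m^r)` -/
def injExWeak (r : ℕ) (Q : RGraph r) (m n : ℕ) : ℕ :=
  sSup {t | ∃ H : RGraph r, H.nv = n ∧ WeakExpFree r m H ∧ injc Q H = t}

/-- `F₀` is `Q`-edge-stable with respect to the family of `ℓ`-partite `r`-graphs -/
def QEdgeStablePartite {r : ℕ} (Q F₀ : RGraph r) (ℓ : ℕ) : Prop :=
  ∀ ε : ℝ, 0 < ε → ∃ δ : ℝ, 0 < δ ∧ ∃ N₀ : ℕ, ∀ n ≥ N₀, ∀ H : RGraph r,
    H.nv = n → FreeOf F₀ H → (1 - δ) * (injExF Q F₀ n : ℝ) ≤ (injc Q H : ℝ) →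
    ∃ H' : RGraph r, H'.verts = H.verts ∧ H'.edges ⊆ H.edges ∧
      ((H.edges \ H'.edges).card : ℝ) ≤ ε * (n : ℝ) ^ r ∧ IsPartite H' ℓ

/-- `H_F^r` is `Q`-edge-stable with respect to the family of `ℓ`-partite `r`-graphs -/
def QEdgeStablePartiteExp (r : ℕ) (Q : RGraph r) (F : RGraph 2) (ℓ : ℕ) : Prop :=
  ∀ ε : ℝ, 0 < ε → ∃ δ : ℝ, 0 < δ ∧ ∃ N₀ : ℕ, ∀ n ≥ N₀, ∀ H : RGraph r,
    H.nv = n → ExpansionFree r F H →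
    (1 - δ) * (injExExp r Q F n : ℝ) ≤ (injc Q H : ℝ) →
    ∃ H' : RGraph r, H'.verts = H.verts ∧ H'.edges ⊆ H.edges ∧
      ((H.edges \ H'.edges).card : ℝ) ≤ ε * (n : ℝ) ^ r ∧ IsPartite H' ℓ

/-- `Q` is `F₀`-Turán-stable (with `ℓ` parts) -/
def TuranStableF {r : ℕ} (Q F₀ : RGraph r) (ℓ : ℕ) : Prop :=
  ∀ ε : ℝ, 0 < ε → ∃ δ : ℝ, 0 < δ ∧ ∃ N₀ : ℕ, ∀ n ≥ N₀, ∀ H : RGraph r,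
    H.nv = n → FreeOf F₀ H → (1 - δ) * (injExF Q F₀ n : ℝ) ≤ (injc Q H : ℝ) →
    ∃ T : RGraph r, T.verts = H.verts ∧ IsBalancedCompleteMultipartite T ℓ ∧
      (((H.edges \ T.edges).card + (T.edges \ H.edges).card : ℕ) : ℝ) ≤ ε * (n : ℝ) ^ r

/-- `Q` is `H_F^r`-Turán-stable (with `ℓ` parts) -/
def TuranStableExp (r : ℕ) (Q : RGraph r) (F : RGraph 2) (ℓ : ℕ) : Prop :=
  ∀ ε : ℝ, 0 < ε → ∃ δ : ℝ, 0 < δ ∧ ∃ N₀ : ℕ, ∀ n ≥ N₀, ∀ H : RGraph r,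
    H.nv = n → ExpansionFree r F H →
    (1 - δ) * (injExExp r Q F n : ℝ) ≤ (injc Q H : ℝ) →
    ∃ T : RGraph r, T.verts = H.verts ∧ IsBalancedCompleteMultipartite T ℓ ∧
      (((H.edges \ T.edges).card + (T.edges \ H.edges).card : ℕ) : ℝ) ≤ ε * (n : ℝ) ^ r


/-!
Among all `r`-graphs on a fixed vertex set take one maximising `Γ` and, among those, one
maximising the codegree energy `∑ d(S)²` over the `(r-1)`-sets `S`. If an uncovered pair `u, v`
had different links, symmetrization-increasingness would make `H_{u→v}` and `H_{v→u}` maximisers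
of `Γ` too. But their energies sum to more than twice that of `H`: the transposition `(u v)`
exchanges the codegrees of sets meeting `{u, v}` in one point, while for `S` avoiding both the
codegrees in `H_{u→v}` and `H_{v→u}` are `d(S) ± (d(S+v) - d(S+u))`, and these differ from
`d(S)` for some `S` because the links differ. So the maximiser is symmetrized, and it lies in `𝔥`
once `Γ` is positive on it.
-/

theorem Finset.map_swap_eq_self {α : Type*} [DecidableEq α] {u v : α} {S : Finset α}
    (h : u ∈ S ↔ v ∈ S) : S.map (Equiv.swap u v).toEmbedding = S := by
  ext x
  rw [mem_map_equiv, Equiv.symm_swap]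
  rcases eq_or_ne x u with rfl | hxu
  · rw [Equiv.swap_apply_left, h]
  rcases eq_or_ne x v with rfl | hxv
  · rw [Equiv.swap_apply_right, h]
  · rw [Equiv.swap_apply_of_ne_of_ne hxu hxv]

theorem Finset.map_swap_eq_insert_erase {α : Type*} [DecidableEq α] {u v : α} {S : Finset α}
    (hu : u ∈ S) (hv : v ∉ S) : S.map (Equiv.swap u v).toEmbedding = insert v (S.erase u) := by
  ext x
  rw [mem_map_equiv, Equiv.symm_swap, mem_insert, mem_erase]
  rcases eq_or_ne x u with rfl | hxu
  · simp [Equiv.swap_apply_left, hv, ne_of_mem_of_not_mem hu hv]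
  rcases eq_or_ne x v with rfl | hxv
  · simp [hu]
  · simp [Equiv.swap_apply_of_ne_of_ne hxu hxv, hxu, hxv]

namespace RGraph

variable {r : ℕ}

@[ext]
theorem ext {H K : RGraph r} (hv : H.verts = K.verts) (he : H.edges = K.edges) : H = K := by
  cases H; cases K; congr

theorem finite_setOf_verts_eq (V : Finset ℕ) : {H : RGraph r | H.verts = V}.Finite := by
  refine Set.Finite.of_finite_image (f := edges) ?_ fun H hH K hK he => ext (hH.trans hK.symm) he
  refine (V.powersetCard r).powerset.finite_toSet.subset ?_
  rintro _ ⟨H, rfl, rfl⟩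
  simp only [coe_powerset, Set.mem_preimage, Set.mem_powerset_iff, coe_subset]
  exact fun e he => mem_powersetCard.2 ⟨H.edge_sub e he, H.edge_card e he⟩

variable {H : RGraph r} {u v : ℕ} {S : Finset ℕ}

theorem Uncovered.symm (h : H.Uncovered u v) : H.Uncovered v u :=
  fun e he huv => h e he huv.symm

theorem mem_link {g : Finset ℕ} :
    g ∈ H.link v ↔ ∃ e ∈ H.edges, v ∈ e ∧ e.erase v = g := by
  simp [link, and_assoc]

theorem symmetrize_verts_of_mem (hu : u ∈ H.verts) (v : ℕ) :
    (H.symmetrize u v).verts = H.verts :=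
  insert_eq_self.2 hu

def codegree (H : RGraph r) (S : Finset ℕ) : ℕ := #{e ∈ H.edges | S ⊆ e}

def codegreeEnergy (H : RGraph r) : ℕ := ∑ S ∈ H.verts.powersetCard (r - 1), H.codegree S ^ 2

theorem codegree_symmetrize (H : RGraph r) (u v : ℕ) (S : Finset ℕ) :
    (H.symmetrize u v).codegree S =
      #{e ∈ H.edges | u ∉ e ∧ S ⊆ e} +
        #{e ∈ H.edges | (v ∈ e ∧ u ∉ e ∧ u ≠ v) ∧ S ⊆ insert u (e.erase v)} := by
  have hinj : Set.InjOn (fun e : Finset ℕ => insert u (e.erase v))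
      {e | v ∈ e ∧ u ∉ e} := by
    rintro a ⟨hva, hua⟩ b ⟨hvb, hub⟩ hab
    have hua' : u ∉ a.erase v := fun h => hua (mem_of_mem_erase h)
    have hub' : u ∉ b.erase v := fun h => hub (mem_of_mem_erase h)
    have h := congrArg (fun s => insert v (s.erase u)) hab
    simpa only [erase_insert hua', erase_insert hub', insert_erase hva, insert_erase hvb] using h
  have hdisj : Disjoint {e ∈ H.edges | u ∉ e ∧ S ⊆ e}
      (({e ∈ H.edges | v ∈ e ∧ u ∉ e ∧ u ≠ v}.image fun e => insert u (e.erase v)).filter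
        (S ⊆ ·)) := by
    refine disjoint_left.2 fun a ha hb => (mem_filter.1 ha).2.1 ?_
    obtain ⟨f, -, rfl⟩ := mem_image.1 (mem_filter.1 hb).1
    exact mem_insert_self _ _
  rw [codegree, symmetrize, filter_union, filter_filter, card_union_of_disjoint hdisj,
    filter_image, card_image_of_injOn, filter_filter]
  refine hinj.mono fun e he => ?_
  have he := (mem_filter.1 (mem_filter.1 (mem_coe.1 he)).1).2
  exact ⟨he.1, he.2.1⟩

theorem codegree_symmetrize_of_right_mem (h : H.Uncovered u v) (hv : v ∈ S) :
    (H.symmetrize u v).codegree S = H.codegree S := by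
  have hnone : #{e ∈ H.edges | (v ∈ e ∧ u ∉ e ∧ u ≠ v) ∧ S ⊆ insert u (e.erase v)} = 0 := by
    refine card_eq_zero.2 (filter_eq_empty_iff.2 ?_)
    rintro e - ⟨⟨-, -, huv⟩, hS⟩
    rcases mem_insert.1 (hS hv) with h | h
    · exact huv h.symm
    · exact notMem_erase v e h
  rw [codegree_symmetrize, hnone, add_zero, codegree]
  refine congrArg card (filter_congr fun e he => ?_)
  exact ⟨And.right, fun hS => ⟨fun hue => h e he ⟨hue, hS hv⟩, hS⟩⟩

theorem codegree_symmetrize_of_left_mem (h : H.Uncovered u v) (hu : u ∈ S) (hv : v ∉ S) :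
    (H.symmetrize u v).codegree S = H.codegree (insert v (S.erase u)) := by
  rw [codegree_symmetrize, codegree, filter_eq_empty_iff.2 fun e _ he => he.1 (he.2 hu),
    card_empty, zero_add]
  refine congrArg card (filter_congr fun e he => ⟨?_, fun hT => ?_⟩)
  · rintro ⟨⟨hve, -, -⟩, hS⟩
    refine insert_subset hve fun x hx => ?_
    obtain ⟨hxu, hxS⟩ := mem_erase.1 hx
    exact mem_of_mem_erase ((mem_insert.1 (hS hxS)).resolve_left hxu)
  · have hve : v ∈ e := hT (mem_insert_self _ _)
    refine ⟨⟨hve, fun hue => h e he ⟨hue, hve⟩, ne_of_mem_of_not_mem hu hv⟩, fun x hx => ?_⟩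
    rcases eq_or_ne x u with rfl | hxu
    · exact mem_insert_self _ _
    · exact mem_insert_of_mem (mem_erase.2 ⟨ne_of_mem_of_not_mem hx hv,
        hT (mem_insert_of_mem (mem_erase.2 ⟨hxu, hx⟩))⟩)

theorem codegree_symmetrize_add_codegree_insert (h : H.Uncovered u v) (huv : u ≠ v)
    (hu : u ∉ S) (hv : v ∉ S) :
    (H.symmetrize u v).codegree S + H.codegree (insert u S) =
      H.codegree S + H.codegree (insert v S) := by
  have hsplit := card_filter_add_card_filter_not (s := {e ∈ H.edges | S ⊆ e}) (u ∈ ·)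
  simp only [filter_filter] at hsplit
  have hfixed : #{e ∈ H.edges | S ⊆ e ∧ u ∉ e} = #{e ∈ H.edges | u ∉ e ∧ S ⊆ e} :=
    congrArg card (filter_congr fun _ _ => and_comm)
  have hmoved : #{e ∈ H.edges | (v ∈ e ∧ u ∉ e ∧ u ≠ v) ∧ S ⊆ insert u (e.erase v)} =
      H.codegree (insert v S) := by
    refine congrArg card (filter_congr fun e he => ⟨?_, fun hT => ?_⟩)
    · rintro ⟨⟨hve, -, -⟩, hS⟩
      refine insert_subset hve fun x hx => ?_
      exact mem_of_mem_erase ((mem_insert.1 (hS hx)).resolve_left (ne_of_mem_of_not_mem hx hu))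
    · have hve : v ∈ e := hT (mem_insert_self _ _)
      refine ⟨⟨hve, fun hue => h e he ⟨hue, hve⟩, huv⟩, fun x hx => ?_⟩
      exact mem_insert_of_mem (mem_erase.2 ⟨ne_of_mem_of_not_mem hx hv, hT (mem_insert_of_mem hx)⟩)
  have hinsert : #{e ∈ H.edges | S ⊆ e ∧ u ∈ e} = H.codegree (insert u S) :=
    congrArg card (filter_congr fun _ _ => by rw [insert_subset_iff, and_comm])
  have hS : H.codegree S = #{e ∈ H.edges | S ⊆ e} := rfl
  rw [codegree_symmetrize, hmoved]
  omega

theorem sq_codegree_add_sq_lt (h : H.Uncovered u v) (huv : u ≠ v) (hu : u ∉ S) (hv : v ∉ S)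
    (hne : H.codegree (insert u S) ≠ H.codegree (insert v S)) :
    H.codegree S ^ 2 + H.codegree S ^ 2 <
      (H.symmetrize u v).codegree S ^ 2 + (H.symmetrize v u).codegree S ^ 2 := by
  have hA := codegree_symmetrize_add_codegree_insert h huv hu hv
  have hB := codegree_symmetrize_add_codegree_insert h.symm huv.symm hv hu
  have hne' : (H.codegree (insert u S) : ℤ) - H.codegree (insert v S) ≠ 0 :=
    sub_ne_zero.2 (by exact_mod_cast hne)
  zify at hA hB ⊢
  nlinarith [mul_self_pos.2 hne']

theorem sq_codegree_add_sq_codegree_map_swap_le (h : H.Uncovered u v) (huv : u ≠ v)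
    (S : Finset ℕ) :
    H.codegree S ^ 2 + H.codegree (S.map (Equiv.swap u v).toEmbedding) ^ 2 ≤
      (H.symmetrize u v).codegree S ^ 2 + (H.symmetrize v u).codegree S ^ 2 := by
  by_cases hu : u ∈ S <;> by_cases hv : v ∈ S
  · rw [map_swap_eq_self (iff_of_true hu hv), codegree_symmetrize_of_right_mem h hv,
      codegree_symmetrize_of_right_mem h.symm hu]
  · rw [map_swap_eq_insert_erase hu hv, codegree_symmetrize_of_left_mem h hu hv,
      codegree_symmetrize_of_right_mem h.symm hu, add_comm]
  · rw [Equiv.swap_comm, map_swap_eq_insert_erase hv hu, codegree_symmetrize_of_right_mem h hv,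
      codegree_symmetrize_of_left_mem h.symm hv hu]
  · rw [map_swap_eq_self (iff_of_false hu hv)]
    by_cases hne : H.codegree (insert u S) = H.codegree (insert v S)
    · have hA := codegree_symmetrize_add_codegree_insert h huv hu hv
      have hB := codegree_symmetrize_add_codegree_insert h.symm huv.symm hv hu
      rw [show (H.symmetrize u v).codegree S = H.codegree S by omega,
        show (H.symmetrize v u).codegree S = H.codegree S by omega]
    · exact (sq_codegree_add_sq_lt h huv hu hv hne).le

theorem codegree_insert_ne_of_mem_link_of_notMem_link {g : Finset ℕ} (h : H.Uncovered u v)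
    (hgu : g ∈ H.link u) (hgv : g ∉ H.link v) :
    g ∈ H.verts.powersetCard (r - 1) ∧ u ∉ g ∧ v ∉ g ∧
      H.codegree (insert u g) ≠ H.codegree (insert v g) := by
  obtain ⟨e, he, hue, rfl⟩ := mem_link.1 hgu
  have hve : v ∉ e.erase u := fun hv => h e he ⟨hue, mem_of_mem_erase hv⟩
  have hcard : (e.erase u).card = r - 1 := by rw [card_erase_of_mem hue, H.edge_card e he]
  refine ⟨mem_powersetCard.2 ⟨(erase_subset u e).trans (H.edge_sub e he), hcard⟩,
    notMem_erase u e, hve, ?_⟩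
  have hpos : 0 < H.codegree (insert u (e.erase u)) := by
    rw [insert_erase hue]
    exact card_pos.2 ⟨e, mem_filter.2 ⟨he, subset_rfl⟩⟩
  -- an `r`-set contained in an edge is that edge, so `g ∪ {v}` would make `g` a link of `v`
  have hzero : H.codegree (insert v (e.erase u)) = 0 := by
    refine card_eq_zero.2 (filter_eq_empty_iff.2 fun f hf hsub => hgv ?_)
    have hr : 1 ≤ r := H.edge_card e he ▸ card_pos.2 ⟨u, hue⟩
    have hfeq : insert v (e.erase u) = f := eq_of_subset_of_card_le hsub (by
      rw [H.edge_card f hf, card_insert_of_notMem hve, hcard]; omega)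
    exact mem_link.2 ⟨f, hf, hfeq ▸ mem_insert_self _ _, hfeq ▸ erase_insert hve⟩
  omega

theorem exists_codegree_insert_ne (h : H.Uncovered u v) (hlink : H.link u ≠ H.link v) :
    ∃ g ∈ H.verts.powersetCard (r - 1), u ∉ g ∧ v ∉ g ∧
      H.codegree (insert u g) ≠ H.codegree (insert v g) := by
  obtain ⟨g, hg⟩ : ∃ g, ¬(g ∈ H.link u ↔ g ∈ H.link v) := by
    by_contra! h'
    exact hlink (Finset.ext h')
  by_cases hgu : g ∈ H.link u
  · exact ⟨g, codegree_insert_ne_of_mem_link_of_notMem_link h hgu (fun hgv => hg (iff_of_true hgu hgv))⟩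
  · obtain ⟨hP, hv, hu, hne⟩ := codegree_insert_ne_of_mem_link_of_notMem_link h.symm
      ((not_iff.1 hg).1 hgu) hgu
    exact ⟨g, hP, hu, hv, hne.symm⟩

theorem two_mul_codegreeEnergy_lt (hu : u ∈ H.verts) (hv : v ∈ H.verts) (huv : u ≠ v)
    (h : H.Uncovered u v) (hlink : H.link u ≠ H.link v) :
    2 * H.codegreeEnergy <
      (H.symmetrize u v).codegreeEnergy + (H.symmetrize v u).codegreeEnergy := by
  set P := H.verts.powersetCard (r - 1)
  have hswap : ∑ S ∈ P, H.codegree (S.map (Equiv.swap u v).toEmbedding) ^ 2 =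
      H.codegreeEnergy := by
    refine sum_equiv (Equiv.swap u v).finsetCongr (fun S => ?_) fun S _ => rfl
    rw [Equiv.finsetCongr_apply, mem_powersetCard, mem_powersetCard, card_map,
      ← map_subset_map (f := (Equiv.swap u v).toEmbedding), map_swap_eq_self (iff_of_true hu hv)]
  calc 2 * H.codegreeEnergy
      = ∑ S ∈ P, (H.codegree S ^ 2 + H.codegree (S.map (Equiv.swap u v).toEmbedding) ^ 2) := by
        rw [sum_add_distrib, hswap, codegreeEnergy, two_mul]
    _ < ∑ S ∈ P, ((H.symmetrize u v).codegree S ^ 2 + (H.symmetrize v u).codegree S ^ 2) := by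
        obtain ⟨g, hg, hug, hvg, hne⟩ := exists_codegree_insert_ne h hlink
        refine sum_lt_sum (fun S _ => sq_codegree_add_sq_codegree_map_swap_le h huv S) ⟨g, hg, ?_⟩
        rw [map_swap_eq_self (iff_of_false hug hvg)]
        exact sq_codegree_add_sq_lt h huv hug hvg hne
    _ = _ := by
        rw [sum_add_distrib, codegreeEnergy, codegreeEnergy, symmetrize_verts_of_mem hu,
          symmetrize_verts_of_mem hv]

end RGraph

theorem SymmetrizationIncreasing.exists_symmetrized_le {r : ℕ} {Γ : RGraph r → ℝ}
    (hΓ : SymmetrizationIncreasing Γ) (H : RGraph r) :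
    ∃ H' : RGraph r, H'.Symmetrized ∧ H'.verts = H.verts ∧ Γ H ≤ Γ H' := by
  obtain ⟨K, hKV, hKmax⟩ := Set.exists_max_image _ (fun K => toLex (Γ K, K.codegreeEnergy))
    (RGraph.finite_setOf_verts_eq H.verts) ⟨H, rfl⟩
  have hle : ∀ K' : RGraph r, K'.verts = H.verts →
      Γ K' < Γ K ∨ Γ K' = Γ K ∧ K'.codegreeEnergy ≤ K.codegreeEnergy :=
    fun K' hK' => Prod.Lex.toLex_le_toLex.1 (hKmax K' hK')
  refine ⟨K, fun u hu v hv huv hunc => ?_, hKV, ?_⟩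
  · by_contra hlink
    have hA := hle _ ((K.symmetrize_verts_of_mem hu v).trans hKV)
    have hB := hle _ ((K.symmetrize_verts_of_mem hv u).trans hKV)
    have henergy := K.two_mul_codegreeEnergy_lt hu hv huv hunc hlink
    rcases hΓ K u hu v hv huv hunc with hlt | ⟨hAeq, hBeq⟩
    · rcases lt_max_iff.1 hlt with hlt | hlt <;> grind
    · grind
  · rcases hle H rfl with hlt | ⟨heq, -⟩
    exacts [hlt.le, heq.le]

theorem exists_mem_verts_eq_le {r : ℕ} {Γ : RGraph r → ℝ} {ℌ : Set (RGraph r)}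
    (hsymInc : SymmetrizationIncreasing Γ) (hsymStab : SymmetrizedStable Γ ℌ)
    {H : RGraph r} (hH : 0 < Γ H) : ∃ H' ∈ ℌ, H'.verts = H.verts ∧ Γ H ≤ Γ H' := by
  obtain ⟨H', hsym, hV, hle⟩ := hsymInc.exists_symmetrized_le H
  exact ⟨H', hsymStab H' hsym (hH.trans_le hle), hV, hle⟩

theorem statement4_general {r : ℕ} (Γ : RGraph r → ℝ) (ℌ : Set (RGraph r))
    (hsymInc : SymmetrizationIncreasing Γ)
    (hsymStab : SymmetrizedStable Γ ℌ) :
    ∀ n : ℕ, 0 < exG Γ n →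
      exG Γ n = sSup {x | ∃ H : RGraph r, H ∈ ℌ ∧ H.nv = n ∧ Γ H = x} := by
  intro n hpos
  obtain ⟨H₀, hH₀n, hH₀⟩ : ∃ H₀ : RGraph r, H₀.nv = n ∧ 0 < Γ H₀ := by
    by_contra! h
    exact hpos.not_ge (Real.sSup_nonpos fun _ ⟨H, hn, hx⟩ => hx ▸ h H hn)
  obtain ⟨H₁, hH₁, hV₁, hH₀₁⟩ := exists_mem_verts_eq_le hsymInc hsymStab hH₀
  refine csSup_eq_csSup_of_forall_exists_le ?_ fun _ ⟨H, _, hn, hx⟩ => ⟨_, ⟨H, hn, hx⟩, le_rfl⟩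
  rintro _ ⟨H, rfl, rfl⟩
  by_cases hH : 0 < Γ H
  · obtain ⟨H', hH', hV, hle⟩ := exists_mem_verts_eq_le hsymInc hsymStab hH
    exact ⟨Γ H', ⟨H', hH', congrArg card hV, rfl⟩, hle⟩
  · exact ⟨Γ H₁, ⟨H₁, hH₁, (congrArg card hV₁).trans hH₀n, rfl⟩, by linarith⟩

/-- **Theorem (Statement 4).** If `Γ` is symmetrization-increasing and symmetrized-stable
with respect to `ℌ`, then for every `n` with `ex_Γ(n) > 0`, the extremal value `ex_Γ(n)`
is attained within the family `ℌ`. -/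
theorem statement4 {r : ℕ} (hr : 2 ≤ r) (Γ : RGraph r → ℝ) (ℌ : Set (RGraph r))
    (hsymInc : SymmetrizationIncreasing Γ)
    (hsymStab : SymmetrizedStable Γ ℌ) :
    ∀ n : ℕ, 0 < exG Γ n →
      exG Γ n = sSup {x | ∃ H : RGraph r, H ∈ ℌ ∧ H.nv = n ∧ Γ H = x} :=
  statement4_general Γ ℌ hsymInc hsymStab

end
end

section
/- There exist ε > 0 and N₀ such that the following holds for all n ≥ N₀: if G is an n-vertex triangle-free graph with δ_{C5}(G) ≥ (10 − ε)·(n/5)^4 and there exists a vertex v ∈ V(G) such that G − v is C5-colorable, then G is C5-colorable. -/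
open Finset

attribute [local instance 10] Classical.propDecidable

noncomputable section

/-!
Let `c : ℕ → ZMod 5` be the `C₅`-coloring of `G - v`, with color classes `V_j`, and let `d_j(u)`
be the number of neighbours of `u` in `V_j`. Apart from `O(n³)` walks through `v`, a pentagon
through a vertex `u ≠ v` of color `j` runs through `V_{j+1}, …, V_{j+4}` in one of the two
directions, so `(10 - ε)(n/5)⁴ ≤ 10 d_{j+1}(u) |V_{j+2}| |V_{j+3}| d_{j+4}(u) + O(n³)`. By AM-GM
this forces `|V_j| ≤ 1.0004 n/5` for every `j`, and then `d_{j±1}(u) ≥ 0.1997 n`. If `w` is a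
neighbour of `v`, triangle-freeness makes the neighbourhoods of `v` and `w` disjoint, so `v` has at
most `0.0004 n` neighbours in each color adjacent to `c w`. On the other hand the pentagons through
`v` give `∑_{i ≠ j} d_i(v) d_j(v) ≥ 0.0031 n²`, so two distinct colors `a, b` each contain more
than `0.0004 n` neighbours of `v`. Hence `a` and `b` are not adjacent in `C₅`, and no neighbour of
`v` has a color adjacent to `a` or `b`; so every neighbour of `v` has a color adjacent to the
common neighbour of `a` and `b`, which is therefore a valid color for `v`.
-/

namespace RGraph

def Adj (G : RGraph 2) (a b : ℕ) : Prop := ({a, b} : Finset ℕ) ∈ G.edges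

variable {G : RGraph 2} {a b : ℕ}

lemma Adj.symm (h : G.Adj a b) : G.Adj b a := by
  rwa [Adj, Finset.pair_comm]

lemma Adj.ne (h : G.Adj a b) : a ≠ b := by
  rintro rfl
  simpa using G.edge_card _ h

lemma Adj.mem_left (h : G.Adj a b) : a ∈ G.verts := G.edge_sub _ h (by simp)

lemma Adj.mem_right (h : G.Adj a b) : b ∈ G.verts := G.edge_sub _ h (by simp)

lemma exists_adj_of_mem_edges {e : Finset ℕ} (he : e ∈ G.edges) :
    ∃ a b, G.Adj a b ∧ e = {a, b} := by
  obtain ⟨a, b, -, rfl⟩ := Finset.card_eq_two.1 (G.edge_card e he)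
  exact ⟨a, b, he, rfl⟩

lemma not_adj_of_freeOf_triangle (hG : FreeOf (completeRG 2 3) G) {c : ℕ}
    (hab : G.Adj a b) (hac : G.Adj a c) : ¬ G.Adj b c := by
  intro hbc
  let φ : ℕ → ℕ := fun x => if x = 0 then a else if x = 1 then b else if x = 2 then c else x
  have hedges : (completeRG 2 3).edges = {{0, 1}, {0, 2}, {1, 2}} := by decide
  refine Set.eq_empty_iff_forall_notMem.1 hG φ ⟨?_, ?_, ?_, ?_⟩
  · intro x hx y hy hxy
    simp only [completeRG, coe_range, Set.mem_Iio] at hx hy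
    interval_cases x <;> interval_cases y <;>
      simp_all [φ, hab.ne, hac.ne, hbc.ne, hab.ne.symm, hac.ne.symm, hbc.ne.symm]
  · intro x hx
    simp only [completeRG, coe_range, Set.mem_Iio] at hx
    interval_cases x <;> simp [φ, hab.mem_left, hab.mem_right, hac.mem_right]
  · simpa [hedges, φ, Adj] using ⟨hab, hac, hbc⟩
  · intro x hx
    simp only [completeRG, mem_range, not_lt] at hx
    simp [φ, show x ≠ 0 by omega, show x ≠ 1 by omega, show x ≠ 2 by omega]

def closedWalks5 (G : RGraph 2) (u : ℕ) : Finset (ℕ × ℕ × ℕ × ℕ) :=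
  (G.verts ×ˢ G.verts ×ˢ G.verts ×ˢ G.verts).filter fun x =>
    G.Adj u x.1 ∧ G.Adj x.1 x.2.1 ∧ G.Adj x.2.1 x.2.2.1 ∧ G.Adj x.2.2.1 x.2.2.2 ∧ G.Adj x.2.2.2 u

lemma pair_succ_mem_cycle5_edges : ∀ m < 5, ({m, (m + 1) % 5} : Finset ℕ) ∈ cycle5.edges := by
  decide

lemma adj_of_mem_injHoms_cycle5 {φ : ℕ → ℕ} (hφ : φ ∈ injHoms cycle5 G) {m m' : ℕ} (hm : m < 5)
    (hm' : m' = (m + 1) % 5) : G.Adj (φ m) (φ m') := by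
  subst hm'
  simpa [Adj] using hφ.2.2.1 _ (pair_succ_mem_cycle5_edges m hm)

lemma encard_injHoms_cycle5_apply_eq_le {k : ℕ} (hk : k < 5) (u : ℕ) :
    {φ ∈ injHoms cycle5 G | φ k = u}.encard ≤ #(G.closedWalks5 u) := by
  -- a pentagon with `φ k = u` is determined by the closed walk it traces from `u`
  let f : (ℕ → ℕ) → ℕ × ℕ × ℕ × ℕ := fun φ =>
    (φ ((k + 1) % 5), φ ((k + 2) % 5), φ ((k + 3) % 5), φ ((k + 4) % 5))
  rw [← Set.encard_coe_eq_coe_finsetCard]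
  refine Set.encard_le_encard_of_injOn (f := f) ?_ ?_
  · rintro φ ⟨hφ, rfl⟩
    have hmem : ∀ m < 5, φ m ∈ G.verts := fun m hm => hφ.2.1 (by simpa [cycle5] using hm)
    have hadj : ∀ {m m'}, m < 5 → m' = (m + 1) % 5 → G.Adj (φ m) (φ m') :=
      adj_of_mem_injHoms_cycle5 hφ
    simp only [closedWalks5, coe_filter, mem_product, f]
    refine ⟨⟨hmem _ (by omega), hmem _ (by omega), hmem _ (by omega), hmem _ (by omega)⟩,
      hadj hk (by omega), hadj (by omega) (by omega), hadj (by omega) (by omega),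
      hadj (by omega) (by omega), hadj (by omega) (by omega)⟩
  · rintro φ ⟨hφ, hφk⟩ ψ ⟨hψ, hψk⟩ h
    simp only [f, Prod.mk.injEq] at h
    funext x
    by_cases hx : x < 5
    · obtain rfl | rfl | rfl | rfl | rfl :
          x = k ∨ x = (k + 1) % 5 ∨ x = (k + 2) % 5 ∨ x = (k + 3) % 5 ∨ x = (k + 4) % 5 := by
        omega
      exacts [hφk.trans hψk.symm, h.1, h.2.1, h.2.2.1, h.2.2.2]
    · rw [hφ.2.2.2 x (by simpa [cycle5] using hx), hψ.2.2.2 x (by simpa [cycle5] using hx)]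

lemma qdeg_cycle5_le (u : ℕ) : qdeg cycle5 G u ≤ 5 * #(G.closedWalks5 u) := by
  have hsub : {φ ∈ injHoms cycle5 G | ∃ x ∈ cycle5.verts, φ x = u} ⊆
      ⋃ k ∈ range 5, {φ ∈ injHoms cycle5 G | φ k = u} := by
    rintro φ ⟨hφ, k, hk, rfl⟩
    exact Set.mem_biUnion hk ⟨hφ, rfl⟩
  have h : {φ ∈ injHoms cycle5 G | ∃ x ∈ cycle5.verts, φ x = u}.encard ≤
      (5 * #(G.closedWalks5 u) : ℕ) :=
    calc _ ≤ _ := Set.encard_le_encard hsub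
      _ ≤ _ := (range 5).set_encard_biUnion_le _
      _ ≤ ∑ _ ∈ range 5, (#(G.closedWalks5 u) : ℕ∞) :=
          sum_le_sum fun k hk => encard_injHoms_cycle5_apply_eq_le (mem_range.1 hk) u
      _ = _ := by simp
  exact (Set.encard_le_coe_iff_finite_ncard_le.1 h).2

end RGraph

def PentagonAdj (i j : ZMod 5) : Prop := j = i + 1 ∨ i = j + 1

instance : DecidableRel PentagonAdj := fun _ _ => instDecidableOr

lemma pentagonAdj_iff : ∀ i j : ZMod 5, PentagonAdj i j ↔ j = i + 1 ∨ j = i + 4 := by decide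

lemma ne_of_pentagonAdj₃ : ∀ i j k l : ZMod 5,
    PentagonAdj i j → PentagonAdj j k → PentagonAdj k l → i ≠ l := by
  decide

lemma eq_of_pentagonAdj₅ : ∀ j a b c d : ZMod 5, PentagonAdj j a → PentagonAdj a b →
    PentagonAdj b c → PentagonAdj c d → PentagonAdj d j →
    (a = j + 1 ∧ b = j + 2 ∧ c = j + 3 ∧ d = j + 4) ∨
      (a = j + 4 ∧ b = j + 3 ∧ c = j + 2 ∧ d = j + 1) := by
  decide

-- `m` is the common neighbour of `a` and `b` in `C₅`
lemma exists_pentagonAdj_of_not_pentagonAdj : ∀ a b : ZMod 5, a ≠ b → ¬ PentagonAdj a b →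
    ∃ m, ∀ k, ¬ PentagonAdj k a → ¬ PentagonAdj k b → PentagonAdj k m := by
  decide

lemma sum_zmod_five {M : Type*} [AddCommMonoid M] (f : ZMod 5 → M) (j : ZMod 5) :
    ∑ k, f k = f j + f (j + 1) + f (j + 2) + f (j + 3) + f (j + 4) := by
  rw [← Equiv.sum_comp (Equiv.addLeft j) f,
    show (univ : Finset (ZMod 5)) = {0, 1, 2, 3, 4} by decide,
    sum_insert (by decide), sum_insert (by decide), sum_insert (by decide),
    sum_insert (by decide), sum_singleton]
  simp [add_assoc]

lemma pair_mem_cycle5_edges_iff :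
    ∀ p < 5, ∀ q < 5, ({p, q} : Finset ℕ) ∈ cycle5.edges ↔ PentagonAdj p q := by
  decide

namespace RGraph

variable {G : RGraph 2} {v : ℕ}

def IsC5ColoringOff (G : RGraph 2) (v : ℕ) (c : ℕ → ZMod 5) : Prop :=
  ∀ a b, G.Adj a b → a ≠ v → b ≠ v → PentagonAdj (c a) (c b)

lemma lt_five_of_mem_homsSet {ψ : ℕ → ℕ} (hψ : ψ ∈ homsSet (G.deleteVert v) cycle5) {x : ℕ}
    (hx : x ∈ G.verts) (hxv : x ≠ v) : ψ x < 5 := by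
  simpa [cycle5] using hψ.1 (by simp [deleteVert, deleteVerts, hx, hxv])

lemma isC5ColoringOff_of_mem_homsSet {ψ : ℕ → ℕ} (hψ : ψ ∈ homsSet (G.deleteVert v) cycle5) :
    G.IsC5ColoringOff v (fun x => (ψ x : ZMod 5)) := by
  intro a b hab ha hb
  have hedge : ({a, b} : Finset ℕ) ∈ (G.deleteVert v).edges := by
    simpa [deleteVert, deleteVerts] using ⟨hab, Ne.symm ha, Ne.symm hb⟩
  have := hψ.2.1 _ hedge
  rw [image_insert, image_singleton] at this
  exact (pair_mem_cycle5_edges_iff _ (lt_five_of_mem_homsSet hψ hab.mem_left ha) _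
    (lt_five_of_mem_homsSet hψ hab.mem_right hb)).1 this

lemma homsSet_cycle5_nonempty_of_extend (hv : v ∈ G.verts) {ψ : ℕ → ℕ}
    (hψ : ψ ∈ homsSet (G.deleteVert v) cycle5) (m : ZMod 5)
    (hm : ∀ w, G.Adj v w → PentagonAdj (ψ w) m) : (homsSet G cycle5).Nonempty := by
  let φ : ℕ → ℕ := fun x => if x = v then m.val else ψ x
  have hlt : ∀ x ∈ G.verts, φ x < 5 := fun x hx => by
    by_cases hxv : x = v
    · simpa [φ, hxv] using ZMod.val_lt m
    · simpa [φ, hxv] using lt_five_of_mem_homsSet hψ hx hxv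
  have hadj : ∀ a b, G.Adj a b → PentagonAdj (φ a) (φ b) := by
    intro a b hab
    by_cases ha : a = v
    · subst ha
      simpa [φ, hab.ne.symm, PentagonAdj, or_comm] using hm b hab
    by_cases hb : b = v
    · subst hb
      simpa [φ, ha] using hm a hab.symm
    simpa [φ, ha, hb] using isC5ColoringOff_of_mem_homsSet hψ a b hab ha hb
  refine ⟨φ, fun x hx => by simpa [cycle5] using hlt x hx, fun e he => ?_, fun x hx => ?_⟩
  · obtain ⟨a, b, hab, rfl⟩ := exists_adj_of_mem_edges he
    rw [image_insert, image_singleton, pair_mem_cycle5_edges_iff _ (hlt a hab.mem_left) _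
      (hlt b hab.mem_right)]
    exact hadj a b hab
  · have hxv : x ≠ v := by rintro rfl; exact hx hv
    simpa [φ, hxv] using hψ.2.2 x (by simp [deleteVert, deleteVerts, hx])

end RGraph

lemma card_le_card_add_of_forall_ne {α : Type*} [DecidableEq α] {A : Finset α}
    {S T : Finset (α × α × α × α)} (v : α) (hT : T ⊆ A ×ˢ A ×ˢ A ×ˢ A)
    (hS : ∀ x ∈ T, x.1 ≠ v → x.2.1 ≠ v → x.2.2.1 ≠ v → x.2.2.2 ≠ v → x ∈ S) :
    #T ≤ #S + 4 * #A ^ 3 := by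
  have hsub : T \ S ⊆ ({v} ×ˢ A ×ˢ A ×ˢ A ∪ A ×ˢ {v} ×ˢ A ×ˢ A) ∪
      (A ×ˢ A ×ˢ {v} ×ˢ A ∪ A ×ˢ A ×ˢ A ×ˢ {v}) := by
    rintro ⟨a, b, c, d⟩ hx
    obtain ⟨hxT, hxS⟩ := mem_sdiff.1 hx
    have hA := hT hxT
    simp only [mem_product] at hA
    simp only [mem_union, mem_product, mem_singleton]
    by_contra! h
    exact hxS (hS _ hxT (by tauto) (by tauto) (by tauto) (by tauto))
  calc #T ≤ #(T \ S) + #S := card_le_card_sdiff_add_card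
    _ ≤ 4 * #A ^ 3 + #S := by
        gcongr
        refine (card_le_card hsub).trans ((card_union_le _ _).trans ?_)
        grw [card_union_le, card_union_le]
        simp only [card_product, card_singleton]
        exact (by ring : _ = _).le
    _ = _ := add_comm _ _

namespace RGraph

variable (G : RGraph 2) (v : ℕ) (c : ℕ → ZMod 5)

def colorClass (j : ZMod 5) : Finset ℕ := (G.verts.erase v).filter (c · = j)

def nbrsIn (u : ℕ) (j : ZMod 5) : Finset ℕ := (G.colorClass v c j).filter (G.Adj u)

variable {G v c} {u x : ℕ} {j : ZMod 5}

lemma mem_colorClass : x ∈ G.colorClass v c j ↔ x ≠ v ∧ x ∈ G.verts ∧ c x = j := by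
  simp [colorClass, and_assoc]

lemma mem_nbrsIn : x ∈ G.nbrsIn v c u j ↔ (x ≠ v ∧ x ∈ G.verts ∧ c x = j) ∧ G.Adj u x := by
  simp [nbrsIn, mem_colorClass]

lemma nbrsIn_subset : G.nbrsIn v c u j ⊆ G.colorClass v c j := filter_subset _ _

lemma sum_card_colorClass_le : ∑ j, #(G.colorClass v c j) ≤ #G.verts :=
  (card_eq_sum_card_fiberwise (fun _ _ => mem_univ _)).symm.trans_le (card_erase_le)

lemma card_closedWalks5_le_of_ne (hc : G.IsC5ColoringOff v c) (huv : u ≠ v) :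
    #(G.closedWalks5 u) ≤ 2 * (#(G.nbrsIn v c u (c u + 1)) * #(G.colorClass v c (c u + 2)) *
      #(G.colorClass v c (c u + 3)) * #(G.nbrsIn v c u (c u + 4))) + 4 * #G.verts ^ 3 := by
  set S₁ := G.nbrsIn v c u (c u + 1) ×ˢ G.colorClass v c (c u + 2) ×ˢ
    G.colorClass v c (c u + 3) ×ˢ G.nbrsIn v c u (c u + 4)
  set S₂ := G.nbrsIn v c u (c u + 4) ×ˢ G.colorClass v c (c u + 3) ×ˢ
    G.colorClass v c (c u + 2) ×ˢ G.nbrsIn v c u (c u + 1)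
  have hS : ∀ x ∈ G.closedWalks5 u, x.1 ≠ v → x.2.1 ≠ v → x.2.2.1 ≠ v → x.2.2.2 ≠ v →
      x ∈ S₁ ∪ S₂ := by
    rintro ⟨x₁, x₂, x₃, x₄⟩ hx h₁ h₂ h₃ h₄
    simp only [closedWalks5, mem_filter, mem_product] at hx
    obtain ⟨⟨m₁, m₂, m₃, m₄⟩, a₀, a₁, a₂, a₃, a₄⟩ := hx
    rcases eq_of_pentagonAdj₅ _ _ _ _ _ (hc _ _ a₀ huv h₁) (hc _ _ a₁ h₁ h₂) (hc _ _ a₂ h₂ h₃)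
      (hc _ _ a₃ h₃ h₄) (hc _ _ a₄ h₄ huv) with ⟨e₁, e₂, e₃, e₄⟩ | ⟨e₁, e₂, e₃, e₄⟩
    · refine mem_union_left _ ?_
      simp [S₁, mem_nbrsIn, mem_colorClass, *, a₄.symm]
    · refine mem_union_right _ ?_
      simp [S₂, mem_nbrsIn, mem_colorClass, *, a₄.symm]
  refine (card_le_card_add_of_forall_ne v (filter_subset _ _) hS).trans ?_
  grw [card_union_le]
  simp only [S₁, S₂, card_product]
  exact (by ring : _ = _).le

lemma card_closedWalks5_self_le (hc : G.IsC5ColoringOff v c) :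
    #(G.closedWalks5 v) ≤ #G.verts ^ 2 * ∑ p ∈ univ.offDiag,
      #(G.nbrsIn v c v p.1) * #(G.nbrsIn v c v p.2) + 4 * #G.verts ^ 3 := by
  set S := univ.offDiag.biUnion fun p : ZMod 5 × ZMod 5 =>
    G.nbrsIn v c v p.1 ×ˢ G.verts ×ˢ G.verts ×ˢ G.nbrsIn v c v p.2
  have hS : ∀ x ∈ G.closedWalks5 v, x.1 ≠ v → x.2.1 ≠ v → x.2.2.1 ≠ v → x.2.2.2 ≠ v →
      x ∈ S := by
    rintro ⟨x₁, x₂, x₃, x₄⟩ hx h₁ h₂ h₃ h₄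
    simp only [closedWalks5, mem_filter, mem_product] at hx
    obtain ⟨⟨m₁, m₂, m₃, m₄⟩, a₀, a₁, a₂, a₃, a₄⟩ := hx
    have hne := ne_of_pentagonAdj₃ _ _ _ _ (hc _ _ a₁ h₁ h₂) (hc _ _ a₂ h₂ h₃) (hc _ _ a₃ h₃ h₄)
    simp only [S, mem_biUnion, mem_offDiag, mem_product, mem_nbrsIn]
    exact ⟨(c x₁, c x₄), ⟨mem_univ _, mem_univ _, hne⟩, ⟨⟨h₁, m₁, rfl⟩, a₀⟩, m₂, m₃,
      ⟨h₄, m₄, rfl⟩, a₄.symm⟩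
  refine (card_le_card_add_of_forall_ne v (filter_subset _ _) hS).trans ?_
  gcongr
  refine card_biUnion_le.trans_eq ?_
  rw [mul_sum]
  refine sum_congr rfl fun p _ => ?_
  simp only [card_product]
  ring

end RGraph

lemma mul_mul_mul_le_add_div_four_pow {x y z w : ℝ} (hx : 0 ≤ x) (hy : 0 ≤ y) (hz : 0 ≤ z)
    (hw : 0 ≤ w) : x * y * z * w ≤ ((x + y + z + w) / 4) ^ 4 := by
  have hxy : x * y ≤ ((x + y) / 2) ^ 2 := by nlinarith [sq_nonneg (x - y)]
  have hzw : z * w ≤ ((z + w) / 2) ^ 2 := by nlinarith [sq_nonneg (z - w)]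
  have hmid : (x + y) / 2 * ((z + w) / 2) ≤ ((x + y + z + w) / 4) ^ 2 := by
    nlinarith [sq_nonneg ((x + y) / 2 - (z + w) / 2)]
  calc x * y * z * w = (x * y) * (z * w) := by ring
    _ ≤ ((x + y) / 2) ^ 2 * ((z + w) / 2) ^ 2 := by gcongr
    _ = ((x + y) / 2 * ((z + w) / 2)) ^ 2 := by ring
    _ ≤ (((x + y + z + w) / 4) ^ 2) ^ 2 := by gcongr
    _ = _ := by ring

lemma le_of_sum_le_of_prod_ge {N a₀ a₁ a₂ a₃ a₄ : ℝ} (h₁ : 0 ≤ a₁) (h₂ : 0 ≤ a₂) (h₃ : 0 ≤ a₃)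
    (h₄ : 0 ≤ a₄) (hsum : a₀ + a₁ + a₂ + a₃ + a₄ ≤ N)
    (hprod : (1 - 1 / 10000) * (N / 5) ^ 4 ≤ a₁ * a₂ * a₃ * a₄) :
    a₀ ≤ (1 + 4 / 10000) * (N / 5) := by
  have hmean : (1 - 1 / 10000) * (N / 5) ≤ (a₁ + a₂ + a₃ + a₄) / 4 := by
    refine le_of_pow_le_pow_left₀ (n := 4) (by norm_num) (by positivity) ?_
    calc ((1 - 1 / 10000) * (N / 5)) ^ 4 ≤ (1 - 1 / 10000) * (N / 5) ^ 4 := by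
          rw [mul_pow]; gcongr; norm_num
      _ ≤ a₁ * a₂ * a₃ * a₄ := hprod
      _ ≤ _ := mul_mul_mul_le_add_div_four_pow h₁ h₂ h₃ h₄
  linarith

lemma ge_of_prod_ge_of_le {N x y z w : ℝ} (hN : 0 < N) (hy : 0 ≤ y) (hz : 0 ≤ z)
    (hw : 0 ≤ w) (hyB : y ≤ (1 + 4 / 10000) * (N / 5)) (hzB : z ≤ (1 + 4 / 10000) * (N / 5))
    (hwB : w ≤ (1 + 4 / 10000) * (N / 5))
    (hprod : (1 - 1 / 10000) * (N / 5) ^ 4 ≤ x * y * z * w) : 1997 / 10000 * N ≤ x := by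
  by_contra! hlt
  have : x * y * z * w ≤ 1997 / 10000 * N * ((1 + 4 / 10000) * (N / 5)) *
      ((1 + 4 / 10000) * (N / 5)) * ((1 + 4 / 10000) * (N / 5)) := by
    gcongr
  nlinarith [pow_pos hN 4]

lemma exists_ne_lt_of_card_offDiag_mul_lt {ι : Type*} [Fintype ι] [DecidableEq ι] {d : ι → ℝ}
    {θ B : ℝ} (hθ : 0 ≤ θ) (hd₀ : ∀ i, 0 ≤ d i) (hdB : ∀ i, d i ≤ B)
    (h : #(univ : Finset ι).offDiag * (θ * B) < ∑ p ∈ univ.offDiag, d p.1 * d p.2) :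
    ∃ i j, i ≠ j ∧ θ < d i ∧ θ < d j := by
  by_contra! hsmall
  have hterm : ∀ p ∈ (univ : Finset ι).offDiag, d p.1 * d p.2 ≤ θ * B := fun p hp => by
    obtain ⟨-, -, hne⟩ := mem_offDiag.1 hp
    rcases le_or_gt (d p.1) θ with h₁ | h₁
    · nlinarith [hd₀ p.2, hdB p.2]
    · nlinarith [hsmall _ _ hne h₁, hd₀ p.1, hdB p.1]
  have := sum_le_card_nsmul _ _ _ hterm
  rw [nsmul_eq_mul] at this
  linarith

namespace RGraph

structure ExtensionSetting (G : RGraph 2) (v : ℕ) (c : ℕ → ZMod 5) (n : ℕ) : Prop where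
  card_verts : #G.verts = n
  large : (10 : ℝ) ^ 9 ≤ n
  mem : v ∈ G.verts
  coloring : G.IsC5ColoringOff v c
  qdeg_ge : ∀ u ∈ G.verts, (10 - 1 / 10000) * ((n : ℝ) / 5) ^ 4 ≤ (qdeg cycle5 G u : ℝ)

namespace ExtensionSetting

variable {G : RGraph 2} {v : ℕ} {c : ℕ → ZMod 5} {n u w : ℕ} {k : ZMod 5}

lemma pow_three_le (h : ExtensionSetting G v c n) : 10 ^ 9 * (n : ℝ) ^ 3 ≤ (n : ℝ) ^ 4 := by
  have := h.large
  nlinarith [pow_nonneg (Nat.cast_nonneg (α := ℝ) n) 3]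

lemma card_closedWalks5_ge (h : ExtensionSetting G v c n) (hu : u ∈ G.verts) :
    (10 - 1 / 10000) * ((n : ℝ) / 5) ^ 4 ≤ 5 * #(G.closedWalks5 u) :=
  (h.qdeg_ge u hu).trans (by exact_mod_cast qdeg_cycle5_le u)

lemma prod_ge (h : ExtensionSetting G v c n) (hu : u ∈ G.verts) (huv : u ≠ v) :
    (1 - 1 / 10000) * ((n : ℝ) / 5) ^ 4 ≤
      #(G.nbrsIn v c u (c u + 1)) * #(G.colorClass v c (c u + 2)) *
        #(G.colorClass v c (c u + 3)) * #(G.nbrsIn v c u (c u + 4)) := by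
  have hwalks : (#(G.closedWalks5 u) : ℝ) ≤
      2 * (#(G.nbrsIn v c u (c u + 1)) * #(G.colorClass v c (c u + 2)) *
        #(G.colorClass v c (c u + 3)) * #(G.nbrsIn v c u (c u + 4))) + 4 * n ^ 3 := by
    exact_mod_cast h.card_verts ▸ card_closedWalks5_le_of_ne h.coloring huv
  nlinarith [h.card_closedWalks5_ge hu, h.pow_three_le]

lemma card_colorClass_le (h : ExtensionSetting G v c n) (j : ZMod 5) :
    (#(G.colorClass v c j) : ℝ) ≤ (1 + 4 / 10000) * (n / 5) := by
  rcases (G.colorClass v c j).eq_empty_or_nonempty with hj | ⟨u, hu⟩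
  · simp only [hj, card_empty, Nat.cast_zero]
    positivity
  obtain ⟨huv, huG, rfl⟩ := mem_colorClass.1 hu
  have hsum : ∑ j, (#(G.colorClass v c j) : ℝ) ≤ n := by
    exact_mod_cast h.card_verts ▸ sum_card_colorClass_le
  rw [sum_zmod_five _ (c u)] at hsum
  refine le_of_sum_le_of_prod_ge (by positivity) (by positivity) (by positivity) (by positivity)
    hsum ((h.prod_ge huG huv).trans ?_)
  gcongr <;> exact nbrsIn_subset

lemma card_nbrsIn_ge (h : ExtensionSetting G v c n) (hu : u ∈ G.verts) (huv : u ≠ v)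
    (hk : PentagonAdj (c u) k) : 1997 / 10000 * (n : ℝ) ≤ #(G.nbrsIn v c u k) := by
  have hn : (0 : ℝ) < n := by linarith [h.large]
  have hB : ∀ j, (#(G.nbrsIn v c u j) : ℝ) ≤ (1 + 4 / 10000) * (n / 5) := fun j =>
    (Nat.cast_le.2 (card_le_card nbrsIn_subset)).trans (h.card_colorClass_le j)
  rcases (pentagonAdj_iff _ _).1 hk with rfl | rfl
  · exact ge_of_prod_ge_of_le hn (by positivity) (by positivity) (by positivity)
      (h.card_colorClass_le (c u + 2)) (h.card_colorClass_le (c u + 3)) (hB (c u + 4))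
      (h.prod_ge hu huv)
  · exact ge_of_prod_ge_of_le hn (by positivity) (by positivity) (by positivity)
      (h.card_colorClass_le (c u + 3)) (h.card_colorClass_le (c u + 2)) (hB (c u + 1))
      ((h.prod_ge hu huv).trans_eq (by ring))

lemma card_nbrsIn_self_le (h : ExtensionSetting G v c n) (hG : FreeOf (completeRG 2 3) G)
    (hw : G.Adj v w) (hk : PentagonAdj (c w) k) : (#(G.nbrsIn v c v k) : ℝ) ≤ 4 / 10000 * n := by
  have hdisj : Disjoint (G.nbrsIn v c v k) (G.nbrsIn v c w k) := disjoint_left.2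
    fun x hxv hxw => not_adj_of_freeOf_triangle hG hw (mem_nbrsIn.1 hxv).2 (mem_nbrsIn.1 hxw).2
  have hsum : (#(G.nbrsIn v c v k) : ℝ) + #(G.nbrsIn v c w k) ≤ #(G.colorClass v c k) := by
    rw [← Nat.cast_add, ← card_union_of_disjoint hdisj]
    exact_mod_cast card_le_card (union_subset nbrsIn_subset nbrsIn_subset)
  linarith [h.card_nbrsIn_ge hw.mem_right hw.ne.symm hk, h.card_colorClass_le k, h.large]

lemma sum_offDiag_ge (h : ExtensionSetting G v c n) :
    31 / 10000 * (n : ℝ) ^ 2 ≤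
      ∑ p ∈ univ.offDiag, (#(G.nbrsIn v c v p.1) : ℝ) * #(G.nbrsIn v c v p.2) := by
  have hwalks : (#(G.closedWalks5 v) : ℝ) ≤ n ^ 2 * ∑ p ∈ univ.offDiag,
      (#(G.nbrsIn v c v p.1) : ℝ) * #(G.nbrsIn v c v p.2) + 4 * n ^ 3 := by
    exact_mod_cast h.card_verts ▸ card_closedWalks5_self_le h.coloring
  have hn : (0 : ℝ) < n ^ 2 := by nlinarith [h.large]
  by_contra! hlt
  nlinarith [h.card_closedWalks5_ge h.mem, h.pow_three_le, mul_lt_mul_of_pos_left hlt hn]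

lemma exists_pentagonAdj_of_adj (h : ExtensionSetting G v c n) (hG : FreeOf (completeRG 2 3) G) :
    ∃ m, ∀ w, G.Adj v w → PentagonAdj (c w) m := by
  have hn : (0 : ℝ) < n := by linarith [h.large]
  have hsmall : ∀ {w k}, G.Adj v w → PentagonAdj (c w) k →
      ¬ 4 / 10000 * (n : ℝ) < #(G.nbrsIn v c v k) :=
    fun hw hk => not_lt.2 (h.card_nbrsIn_self_le hG hw hk)
  have hoff : #(univ : Finset (ZMod 5)).offDiag = 20 := by decide
  obtain ⟨a, b, hab, ha, hb⟩ := exists_ne_lt_of_card_offDiag_mul_lt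
    (d := fun j => (#(G.nbrsIn v c v j) : ℝ)) (θ := 4 / 10000 * (n : ℝ))
    (by positivity) (fun _ => Nat.cast_nonneg _)
    (fun j => (Nat.cast_le.2 (card_le_card nbrsIn_subset)).trans (h.card_colorClass_le j))
    (by rw [hoff]; nlinarith [h.sum_offDiag_ge])
  have hnadj : ¬ PentagonAdj a b := fun hadj => by
    obtain ⟨w, hw⟩ : (G.nbrsIn v c v a).Nonempty :=
      card_pos.1 (by exact_mod_cast (by positivity : (0 : ℝ) ≤ _).trans_lt ha)
    obtain ⟨⟨-, -, rfl⟩, hvw⟩ := mem_nbrsIn.1 hw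
    exact hsmall hvw hadj hb
  obtain ⟨m, hm⟩ := exists_pentagonAdj_of_not_pentagonAdj a b hab hnadj
  exact ⟨m, fun w hw => hm _ (fun hk => hsmall hw hk ha) (fun hk => hsmall hw hk hb)⟩

end ExtensionSetting

end RGraph

/-- **Theorem (Statement 8, vertex-extendability for the Erdős Pentagon problem).**
There exist `ε > 0` and `N₀` such that for every `n ≥ N₀`: if `G` is an `n`-vertex
triangle-free graph with minimum `C₅`-degree at least `(10 - ε)(n/5)⁴` and `G - v` is
`C₅`-colorable for some vertex `v`, then `G` is `C₅`-colorable. -/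
theorem statement8 :
    ∃ ε : ℝ, 0 < ε ∧ ∃ N₀ : ℕ, ∀ n ≥ N₀, ∀ G : RGraph 2, G.nv = n →
      FreeOf (completeRG 2 3) G →
      (∀ v ∈ G.verts, (10 - ε) * ((n : ℝ) / 5) ^ 4 ≤ (qdeg cycle5 G v : ℝ)) →
      (∃ v ∈ G.verts, (homsSet (G.deleteVert v) cycle5).Nonempty) →
      (homsSet G cycle5).Nonempty := by
  refine ⟨1 / 10000, by norm_num, 10 ^ 9, fun n hn G hGn hG hdeg ⟨v, hv, ψ, hψ⟩ => ?_⟩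
  have h : G.ExtensionSetting v (fun x => (ψ x : ZMod 5)) n :=
    ⟨hGn, by exact_mod_cast hn, hv, RGraph.isC5ColoringOff_of_mem_homsSet hψ, hdeg⟩
  obtain ⟨m, hm⟩ := h.exists_pentagonAdj_of_adj hG
  exact RGraph.homsSet_cycle5_nonempty_of_extend hv hψ m hm

end
end

section
/- Let r ≥ 2 be an integer, Q an r-graph with no isolated vertices, and F an edge-critical graph with χ(F) = ℓ + 1. Suppose that π_inj(Q, H_F^r) > 0 and that H_F^r is Q-degree-stable with respect to the family of ℓ-partite r-graphs. Then for all sufficiently large n, inj(n, Q, H_F^r) = max{inj(Q, H) : H is an ℓ-partite r-graph on n vertices}. -/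
open Finset

attribute [local instance 10] Classical.propDecidable

noncomputable section

/-!
Write `I(n)` and `P(n)` for the maxima of `inj(Q, ·)` over `H_F^r`-free and over `ℓ`-partite
`r`-graphs on `n` vertices; `P ≤ I` because `χ(F) = ℓ + 1`. Deleting a vertex of minimum
`Q`-degree from an extremal graph gives `(n + 1 - v(Q)) I(n+1) ≤ (n + 1) I(n)`, and cloning a
vertex of maximum `Q`-degree in an extremal partite graph gives `(n + v(Q)) P(n) ≤ n P(n+1)`.
If an extremal graph for `I(n+1)` is not `ℓ`-partite, degree-stability yields a vertex of
`Q`-degree below `(1 - ε) v(Q) I(n+1) / (n+1)`, and deleting it bounds `I(n+1)` by `I(n)`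
plus that degree. Since `I(n) ≥ π n^v(Q) / 2`, these three inequalities make the nonnegative
gap `(I(n) - P(n)) / n^v(Q)` drop by `c / (n+1)` whenever `I(n+1) ≠ P(n+1)`. The harmonic
series diverges, so `I(n) = P(n)` for some large `n`, and then for all larger `n`.
-/

/-- Read `a, a', b, b'` as `inj(n+1, Q, ℌ), inj(n, Q, ℌ), inj(n+1, Q, 𝓑), inj(n, Q, 𝓑)`. -/
lemma sub_le_of_injMax_recursions {k n ε a a' b b' : ℝ} (hk : 1 ≤ k) (hε : 0 < ε)
    (hε1 : ε ≤ 1) (hn : 2 * k ≤ ε * n) (ha' : 0 ≤ a')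
    (hA : a ≤ a' + (1 - ε) * k * a / (n + 1))
    (hB : (n + k) * b' ≤ n * b)
    (hC : (n + 1 - k) * a ≤ (n + 1) * a') :
    a - b ≤ (1 + k / n) * (a' - b') - ε * k * a' / (2 * (n + 1)) := by
  have hn0 : 0 < n := by nlinarith
  have hD : 0 < n + 1 - k := by nlinarith
  have hb : (1 + k / n) * b' ≤ b := by
    rw [show (1 + k / n) * b' = (n + k) * b' / n by field_simp, div_le_iff₀ hn0]
    linarith
  have ha : a ≤ a' + (1 - ε) * k * a' / (n + 1 - k) := by
    have h1 : (1 - ε) * k * a / (n + 1) ≤ (1 - ε) * k * a' / (n + 1 - k) := by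
      rw [div_le_div_iff₀ (by linarith) hD]
      have : 0 ≤ (1 - ε) * k := by nlinarith
      nlinarith
    linarith
  -- `(1 - ε) / (n + 1 - k) ≤ 1 / n - ε / (2 (n + 1))`, which is where `ε n ≥ 2 k` is needed
  have hcoef : 0 ≤ k / n * a' - ε * k * a' / (2 * (n + 1)) - (1 - ε) * k * a' / (n + 1 - k) := by
    rw [show k / n * a' - ε * k * a' / (2 * (n + 1)) - (1 - ε) * k * a' / (n + 1 - k)
      = k * a' * ((n + 1) * (2 - 2 * k + ε * n) + ε * n * k) / (2 * n * (n + 1) * (n + 1 - k))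
      by field_simp; ring]
    exact div_nonneg (mul_nonneg (by positivity) (by nlinarith)) (by positivity)
  nlinarith

lemma div_pow_le_sub_of_le {k : ℕ} {n ε π d d' a' : ℝ} (hk : 1 ≤ k) (hn : 1 ≤ n) (hε : 0 < ε)
    (hπ : 0 < π) (hd' : 0 ≤ d') (ha' : π / 2 * n ^ k ≤ a')
    (hd : d ≤ (1 + k / n) * d' - ε * k * a' / (2 * (n + 1))) :
    d / (n + 1) ^ k ≤ d' / n ^ k - ε * π / 2 ^ (k + 2) / (n + 1) := by
  have hn0 : 0 < n := by linarith
  have hbern : (1 + k / n) * n ^ k ≤ (n + 1) ^ k := by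
    calc (1 + k / n) * n ^ k ≤ (1 + 1 / n) ^ k * n ^ k := by
          gcongr
          rw [div_eq_mul_one_div (k : ℝ)]
          exact one_add_mul_le_pow (by linarith [one_div_pos.2 hn0]) k
      _ = (n + 1) ^ k := by rw [← mul_pow]; field_simp
  have hpow : (n + 1) ^ k ≤ 2 ^ k * n ^ k := by
    rw [← mul_pow]; gcongr; linarith
  have h1 : (1 + k / n) * d' / (n + 1) ^ k ≤ d' / n ^ k := by
    rw [div_le_div_iff₀ (by positivity) (by positivity)]
    nlinarith [mul_le_mul_of_nonneg_left hbern hd']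
  have h2 : ε * π / 2 ^ (k + 2) / (n + 1) ≤ ε * k * a' / (2 * (n + 1)) / (n + 1) ^ k := by
    have hπa : π * n ^ k ≤ 2 * a' := by linarith
    have ha'0 : 0 ≤ a' := by nlinarith [pow_pos hn0 k]
    rw [div_div, div_div, div_le_div_iff₀ (by positivity) (by positivity), pow_add]
    calc ε * π * (2 * (n + 1) * (n + 1) ^ k)
        ≤ ε * π * (2 * (n + 1) * (2 ^ k * n ^ k)) := by gcongr
      _ = ε * (n + 1) * 2 ^ (k + 1) * (π * n ^ k) := by ring
      _ ≤ ε * (n + 1) * 2 ^ (k + 1) * (2 * a') := by gcongr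
      _ = ε * (n + 1) * 2 ^ k * 4 * a' * 1 := by ring
      _ ≤ ε * (n + 1) * 2 ^ k * 4 * a' * k :=
          mul_le_mul_of_nonneg_left (by exact_mod_cast hk) (mul_nonneg (by positivity) ha'0)
      _ = ε * k * a' * (2 ^ k * 2 ^ 2 * (n + 1)) := by ring
  calc d / (n + 1) ^ k ≤ ((1 + k / n) * d' - ε * k * a' / (2 * (n + 1))) / (n + 1) ^ k := by
        gcongr
    _ = (1 + k / n) * d' / (n + 1) ^ k - ε * k * a' / (2 * (n + 1)) / (n + 1) ^ k := sub_div _ _ _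
    _ ≤ _ := by linarith

/-- A nonnegative potential cannot drop by `c / (n + 1)` at every step, since the harmonic
series diverges; and once `p` holds the potential is `0`, so it cannot drop any more. -/
lemma eventually_of_potential_drop {ψ : ℕ → ℝ} {p : ℕ → Prop} {c : ℝ} {N : ℕ}
    (hψ : ∀ n, 0 ≤ ψ n) (hc : 0 < c) (hp : ∀ n, p n → ψ n = 0)
    (hstep : ∀ n ≥ N, p (n + 1) ∨ ψ (n + 1) ≤ ψ n - c / (n + 1)) :
    ∀ᶠ n in Filter.atTop, p n := by
  have hpersist : ∀ n ≥ N, p n → p (n + 1) := fun n hn hpn =>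
    (hstep n hn).resolve_right fun h => by
      rw [hp n hpn] at h
      linarith [hψ (n + 1), div_pos hc (Nat.cast_add_one_pos n)]
  obtain ⟨n₀, hn₀, hpn₀⟩ : ∃ n ≥ N, p n := by
    by_contra! hnot
    have hdrop : ∀ j, ψ (N + j) + ∑ i ∈ Finset.range j, c / ((i + N : ℕ) + 1 : ℝ) ≤ ψ N := by
      intro j
      induction j with
      | zero => simp
      | succ j ih =>
        have h := (hstep (N + j) (by omega)).resolve_left (hnot _ (by omega))
        rw [Finset.sum_range_succ, Nat.add_comm j N, ← Nat.add_assoc]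
        push_cast at h ih ⊢
        linarith
    have hsum : Summable fun i : ℕ => c / ((i + N : ℕ) + 1 : ℝ) :=
      summable_of_sum_range_le (c := ψ N) (fun _ => by positivity)
        fun j => by linarith [hdrop j, hψ (N + j)]
    rw [summable_nat_add_iff (f := fun i : ℕ => c / ((i : ℝ) + 1)) N] at hsum
    simp_rw [div_eq_mul_one_div c] at hsum
    refine Real.not_summable_one_div_natCast ((summable_nat_add_iff 1).1 ?_)
    simpa using (summable_mul_left_iff hc.ne').1 hsum
  filter_upwards [Filter.eventually_ge_atTop n₀] with n hn
  induction n, hn using Nat.le_induction with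
  | base => exact hpn₀
  | succ n hn ih => exact hpersist n (hn₀.trans hn) ih

lemma eventually_half_mul_pow_le {f : ℕ → ℝ} {k : ℕ} {π : ℝ} (hπ : 0 < π)
    (h : Filter.Tendsto (fun n : ℕ => f n / (n : ℝ) ^ k) Filter.atTop (nhds π)) :
    ∀ᶠ n : ℕ in Filter.atTop, π / 2 * (n : ℝ) ^ k ≤ f n := by
  filter_upwards [h.eventually (lt_mem_nhds (half_lt_self hπ)), Filter.eventually_gt_atTop 0]
    with n hn hn0
  exact ((lt_div_iff₀ (by positivity)).1 hn).le

namespace RGraph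

variable {r : ℕ}

lemma injHoms_subset_image_pi (Q H : RGraph r) :
    injHoms Q H ⊆ ↑((Q.verts.pi fun _ => H.verts).image
      fun f x => if h : x ∈ Q.verts then f x h else x) := by
  rintro φ ⟨-, hmap, -, hid⟩
  refine Finset.mem_coe.2 (Finset.mem_image.2
    ⟨fun x _ => φ x, Finset.mem_pi.2 fun x hx => hmap hx, ?_⟩)
  funext x
  by_cases hx : x ∈ Q.verts
  · simp [hx]
  · simp [hx, hid x hx]

lemma injHoms_finite (Q H : RGraph r) : (injHoms Q H).Finite :=
  (Finset.finite_toSet _).subset (injHoms_subset_image_pi Q H)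

lemma injc_le_pow (Q H : RGraph r) : injc Q H ≤ H.nv ^ Q.nv := by
  calc injc Q H ≤ _ := Set.ncard_le_ncard (injHoms_subset_image_pi Q H) (Finset.finite_toSet _)
    _ ≤ (Q.verts.pi fun _ => H.verts).card := by
        rw [Set.ncard_coe_finset]; exact Finset.card_image_le
    _ = H.nv ^ Q.nv := by rw [Finset.card_pi, Finset.prod_const]; rfl

lemma injHoms_mono {Q H' H : RGraph r} (h : H'.IsSubgraph H) :
    injHoms Q H' ⊆ injHoms Q H := by
  rintro φ ⟨hinj, hmap, hedge, hid⟩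
  exact ⟨hinj, hmap.mono_right (Finset.coe_subset.2 h.1), fun e he => h.2 (hedge e he), hid⟩

lemma qdeg_eq_card_filter (Q H : RGraph r) (v : ℕ) :
    qdeg Q H v =
      ((injHoms_finite Q H).toFinset.filter fun φ => ∃ x ∈ Q.verts, φ x = v).card := by
  rw [qdeg, ← Set.ncard_coe_finset]
  congr 1
  ext φ
  simp

lemma sum_qdeg (Q H : RGraph r) : ∑ v ∈ H.verts, qdeg Q H v = Q.nv * injc Q H := by
  have himage : ∀ φ ∈ injHoms Q H,
      (H.verts.filter fun v => ∃ x ∈ Q.verts, φ x = v) = Q.verts.image φ := by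
    rintro φ ⟨-, hmap, -, -⟩
    ext v
    simp only [Finset.mem_filter, Finset.mem_image]
    exact ⟨fun h => h.2, fun ⟨x, hx, hxv⟩ => ⟨hxv ▸ hmap hx, x, hx, hxv⟩⟩
  calc ∑ v ∈ H.verts, qdeg Q H v
      = ∑ v ∈ H.verts, ((injHoms_finite Q H).toFinset.bipartiteAbove
          (fun v φ => ∃ x ∈ Q.verts, φ x = v) v).card := by
        simp_rw [qdeg_eq_card_filter]; rfl
    _ = ∑ φ ∈ (injHoms_finite Q H).toFinset, (Q.verts.image φ).card := by
        rw [Finset.sum_card_bipartiteAbove_eq_sum_card_bipartiteBelow]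
        refine Finset.sum_congr rfl fun φ hφ => ?_
        rw [Finset.bipartiteBelow, himage φ ((injHoms_finite Q H).mem_toFinset.1 hφ)]
    _ = Q.nv * injc Q H := by
        rw [injc, Set.ncard_eq_toFinset_card _ (injHoms_finite Q H), mul_comm,
          ← smul_eq_mul, ← Finset.sum_const]
        refine Finset.sum_congr rfl fun φ hφ => ?_
        exact Finset.card_image_of_injOn ((injHoms_finite Q H).mem_toFinset.1 hφ).1

lemma exists_mul_qdeg_le (Q H : RGraph r) (hH : H.verts.Nonempty) :
    ∃ v ∈ H.verts, H.nv * qdeg Q H v ≤ Q.nv * injc Q H :=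
  Finset.exists_le_of_sum_le (f := fun v => H.nv * qdeg Q H v)
    (g := fun _ => Q.nv * injc Q H) hH <| by
    rw [Finset.sum_const, smul_eq_mul, ← Finset.mul_sum, sum_qdeg]; rfl

lemma exists_mul_qdeg_ge (Q H : RGraph r) (hH : H.verts.Nonempty) :
    ∃ v ∈ H.verts, Q.nv * injc Q H ≤ H.nv * qdeg Q H v :=
  Finset.exists_le_of_sum_le (f := fun _ => Q.nv * injc Q H)
    (g := fun v => H.nv * qdeg Q H v) hH <| by
    rw [Finset.sum_const, smul_eq_mul, ← Finset.mul_sum, sum_qdeg]; rfl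

lemma deleteVert_isSubgraph (H : RGraph r) (v : ℕ) : (H.deleteVert v).IsSubgraph H :=
  ⟨Finset.sdiff_subset, Finset.filter_subset _ _⟩

lemma nv_deleteVert {H : RGraph r} {v : ℕ} (hv : v ∈ H.verts) :
    (H.deleteVert v).nv = H.nv - 1 :=
  Finset.card_sdiff_of_subset (Finset.singleton_subset_iff.2 hv)

lemma injc_le_qdeg_add_injc_deleteVert (Q H : RGraph r) (v : ℕ) :
    injc Q H ≤ qdeg Q H v + injc Q (H.deleteVert v) := by
  have hcover : injHoms Q H ⊆
      {φ ∈ injHoms Q H | ∃ x ∈ Q.verts, φ x = v} ∪ injHoms Q (H.deleteVert v) := by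
    rintro φ hφ
    by_cases hv : ∃ x ∈ Q.verts, φ x = v
    · exact Or.inl ⟨hφ, hv⟩
    obtain ⟨hinj, hmap, hedge, hid⟩ := hφ
    refine Or.inr ⟨hinj, fun x hx => ?_, fun e he => ?_, hid⟩
    · exact Finset.mem_sdiff.2 ⟨hmap hx, by simpa using fun h => hv ⟨x, hx, h⟩⟩
    · refine Finset.mem_filter.2 ⟨hedge e he, fun w hw hwe => ?_⟩
      obtain ⟨x, hx, rfl⟩ := Finset.mem_image.1 hwe
      exact hv ⟨x, Q.edge_sub e he hx, Finset.mem_singleton.1 hw⟩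
  calc injc Q H ≤ _ := Set.ncard_le_ncard hcover
        (((injHoms_finite Q H).sep _).union (injHoms_finite _ _))
    _ ≤ _ := Set.ncard_union_le _ _

def fresh (H : RGraph r) : ℕ := H.verts.sup id + 1

lemma fresh_notMem (H : RGraph r) : H.fresh ∉ H.verts := fun h => by
  have : H.fresh ≤ H.verts.sup id := Finset.le_sup (f := id) h
  simp only [fresh] at this
  omega

lemma swap_fresh_mem_insert {H : RGraph r} (u : ℕ) {y : ℕ} (hy : y ∈ H.verts) :
    Equiv.swap u H.fresh y ∈ insert H.fresh H.verts := by
  rw [Equiv.swap_apply_def]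
  split_ifs with hu hw
  · exact Finset.mem_insert_self _ _
  · exact absurd (hw ▸ hy) H.fresh_notMem
  · exact Finset.mem_insert_of_mem hy

/-- The transposition of `u` and the fresh vertex fixes every edge avoiding `u`, so the new
edges are exactly the copies of the edges through `u`: the fresh vertex is a twin of `u`. -/
def clone (H : RGraph r) (u : ℕ) : RGraph r where
  verts := insert H.fresh H.verts
  edges := H.edges ∪ H.edges.image (Finset.image (Equiv.swap u H.fresh))
  edge_card e he := by
    rcases Finset.mem_union.1 he with he | he
    · exact H.edge_card e he
    · obtain ⟨f, hf, rfl⟩ := Finset.mem_image.1 he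
      rw [Finset.card_image_of_injective _ (Equiv.injective _), H.edge_card f hf]
  edge_sub e he := by
    rcases Finset.mem_union.1 he with he | he
    · exact (H.edge_sub e he).trans (Finset.subset_insert _ _)
    · obtain ⟨f, hf, rfl⟩ := Finset.mem_image.1 he
      intro x hx
      obtain ⟨y, hy, rfl⟩ := Finset.mem_image.1 hx
      exact swap_fresh_mem_insert u (H.edge_sub f hf hy)

lemma nv_clone (H : RGraph r) (u : ℕ) : (H.clone u).nv = H.nv + 1 :=
  Finset.card_insert_of_notMem H.fresh_notMem

lemma isSubgraph_clone (H : RGraph r) (u : ℕ) : H.IsSubgraph (H.clone u) :=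
  ⟨Finset.subset_insert _ _, Finset.subset_union_left⟩

lemma IsPartite.clone {H : RGraph r} {ℓ : ℕ} (hH : IsPartite H ℓ) {u : ℕ}
    (hu : u ∈ H.verts) : IsPartite (H.clone u) ℓ := by
  obtain ⟨c, hcℓ, hc⟩ := hH
  set c' := Function.update c H.fresh (c u)
  have hc'_eq : ∀ y ∈ H.verts, c' y = c y := fun y hy =>
    Function.update_of_ne (by rintro rfl; exact H.fresh_notMem hy) _ _
  have hc'_swap : ∀ y ∈ H.verts, c' (Equiv.swap u H.fresh y) = c y := by
    intro y hy
    by_cases hyu : y = u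
    · subst hyu; simp [c']
    · rw [Equiv.swap_apply_of_ne_of_ne hyu (by rintro rfl; exact H.fresh_notMem hy), hc'_eq y hy]
  refine ⟨c', fun x hx => ?_, fun e he a ha b hb hab => ?_⟩
  · rcases Finset.mem_insert.1 hx with rfl | hx
    · simpa [c'] using hcℓ u hu
    · exact hc'_eq x hx ▸ hcℓ x hx
  rcases Finset.mem_union.1 he with he | he
  · rw [hc'_eq a (H.edge_sub e he ha), hc'_eq b (H.edge_sub e he hb)] at hab
    exact hc e he a ha b hb hab
  · obtain ⟨f, hf, rfl⟩ := Finset.mem_image.1 he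
    obtain ⟨a', ha', rfl⟩ := Finset.mem_image.1 ha
    obtain ⟨b', hb', rfl⟩ := Finset.mem_image.1 hb
    rw [hc'_swap a' (H.edge_sub f hf ha'), hc'_swap b' (H.edge_sub f hf hb')] at hab
    rw [hc f hf a' ha' b' hb' hab]

def swapFresh (Q H : RGraph r) (u : ℕ) (φ : ℕ → ℕ) : ℕ → ℕ :=
  fun x => if x ∈ Q.verts then Equiv.swap u H.fresh (φ x) else φ x

lemma swapFresh_involutive (Q H : RGraph r) (u : ℕ) : Function.Involutive (swapFresh Q H u) := by
  intro φ
  funext x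
  by_cases hx : x ∈ Q.verts <;> simp [swapFresh, hx]

lemma swapFresh_mem_injHoms_clone {Q H : RGraph r} {u : ℕ} {φ : ℕ → ℕ}
    (hφ : φ ∈ injHoms Q H) : swapFresh Q H u φ ∈ injHoms Q (H.clone u) := by
  obtain ⟨hinj, hmap, hedge, hid⟩ := hφ
  have hon : ∀ x ∈ Q.verts, swapFresh Q H u φ x = Equiv.swap u H.fresh (φ x) :=
    fun x hx => if_pos hx
  refine ⟨fun x hx y hy hxy => ?_, fun x hx => ?_, fun e he => ?_, fun x hx => ?_⟩
  · rw [hon x hx, hon y hy] at hxy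
    exact hinj hx hy ((Equiv.injective _) hxy)
  · rw [hon x hx]
    exact swap_fresh_mem_insert u (hmap hx)
  · have himage : e.image (swapFresh Q H u φ) = (e.image φ).image (Equiv.swap u H.fresh) := by
      rw [Finset.image_image]
      exact Finset.image_congr fun x hx => hon x (Q.edge_sub e he hx)
    rw [himage]
    exact Finset.mem_union_right _ (Finset.mem_image_of_mem _ (hedge e he))
  · simp [swapFresh, hx, hid x hx]

lemma injc_add_qdeg_le_injc_clone (Q H : RGraph r) (u : ℕ) :
    injc Q H + qdeg Q H u ≤ injc Q (H.clone u) := by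
  set D := {φ ∈ injHoms Q H | ∃ x ∈ Q.verts, φ x = u}
  -- the images of homomorphisms through `u` pass through the fresh vertex
  have hdisj : Disjoint (injHoms Q H) (swapFresh Q H u '' D) := by
    refine Set.disjoint_left.2 fun ψ hψ ⟨φ, ⟨_, x, hx, hxu⟩, hψφ⟩ => H.fresh_notMem ?_
    have := hψ.2.1 hx
    rwa [← hψφ, swapFresh, if_pos hx, hxu, Equiv.swap_apply_left] at this
  have hsub : injHoms Q H ∪ swapFresh Q H u '' D ⊆ injHoms Q (H.clone u) :=
    Set.union_subset (injHoms_mono (H.isSubgraph_clone u))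
      (Set.image_subset_iff.2 fun φ hφ => swapFresh_mem_injHoms_clone hφ.1)
  calc injc Q H + qdeg Q H u
      = (injHoms Q H ∪ swapFresh Q H u '' D).ncard := by
        rw [Set.ncard_union_eq hdisj (injHoms_finite Q H)
          (((injHoms_finite Q H).sep _).image _),
          Set.ncard_image_of_injective _ (swapFresh_involutive Q H u).injective]
        rfl
    _ ≤ injc Q (H.clone u) := Set.ncard_le_ncard hsub (injHoms_finite _ _)

def edgeless (r n : ℕ) : RGraph r where
  verts := Finset.range n
  edges := ∅
  edge_card := by simp
  edge_sub := by simp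

lemma nv_edgeless (r n : ℕ) : (edgeless r n).nv = n :=
  Finset.card_range n

lemma isPartite_edgeless (n : ℕ) {ℓ : ℕ} (hℓ : 0 < ℓ) : IsPartite (edgeless r n) ℓ :=
  ⟨fun _ => 0, fun _ _ => hℓ, by simp [edgeless]⟩

lemma not_isPartite_one {H : RGraph r} (hr : 2 ≤ r) (hH : H.edges.Nonempty) :
    ¬ IsPartite H 1 := by
  rintro ⟨c, hc1, hc⟩
  obtain ⟨e, he⟩ := hH
  obtain ⟨a, ha, b, hb, hab⟩ := Finset.one_lt_card.1 (by rw [H.edge_card e he]; omega)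
  have hca := hc1 a (H.edge_sub e he ha)
  have hcb := hc1 b (H.edge_sub e he hb)
  exact hab (hc e he a ha b hb (by omega))

lemma isPartite_chrNum {H : RGraph r} (h : chrNum H ≠ 0) : IsPartite H (chrNum H) :=
  Nat.sInf_mem (Nat.nonempty_of_pos_sInf (Nat.pos_of_ne_zero h))

lemma hereditary_expansionFree (r : ℕ) (F : RGraph 2) :
    Hereditary {H : RGraph r | ExpansionFree r F H} :=
  fun _ hH _ hsub E hE => Set.subset_empty_iff.1 (hH E hE ▸ injHoms_mono hsub)

/-- An embedding of `H_F^r` into an `ℓ`-partite graph restricts to an `ℓ`-coloring of `F`. -/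
lemma IsPartite.expansionFree {F : RGraph 2} {ℓ : ℕ} (hℓ : ℓ < chrNum F) {H : RGraph r}
    (hH : IsPartite H ℓ) : ExpansionFree r F H := by
  rintro E ⟨f, -, -, hEv, hEe⟩
  refine Set.eq_empty_iff_forall_notMem.2 fun φ ⟨hinj, hmap, hedge, _⟩ => ?_
  obtain ⟨c, hcℓ, hc⟩ := hH
  have hFE : ∀ a ∈ F.verts, a ∈ E.verts := fun a ha => hEv ▸ Finset.mem_union_left _ ha
  have hF : IsPartite F ℓ := by
    refine ⟨c ∘ φ, fun v hv => hcℓ _ (hmap (hFE v hv)), fun e he a ha b hb hab => ?_⟩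
    have himage := hedge _ (hEe ▸ Finset.mem_image_of_mem _ he : e ∪ f e ∈ E.edges)
    exact hinj (hFE a (F.edge_sub e he ha)) (hFE b (F.edge_sub e he hb))
      (hc _ himage _ (Finset.mem_image_of_mem _ (Finset.mem_union_left _ ha))
        _ (Finset.mem_image_of_mem _ (Finset.mem_union_left _ hb)) hab)
  exact absurd (Nat.sInf_le hF) (not_le.2 hℓ)

/-- `inj(n, Q, ℌ)`; `injExExp` and `injExPartite` are definitionally this for the families
of `H_F^r`-free and of `ℓ`-partite graphs. -/
def injMax (Q : RGraph r) (ℌ : Set (RGraph r)) (n : ℕ) : ℕ :=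
  sSup {t | ∃ H : RGraph r, H.nv = n ∧ H ∈ ℌ ∧ injc Q H = t}

section injMax

variable {Q : RGraph r} {ℌ 𝓑 : Set (RGraph r)} {n : ℕ}

lemma bddAbove_injc (Q : RGraph r) (ℌ : Set (RGraph r)) (n : ℕ) :
    BddAbove {t | ∃ H : RGraph r, H.nv = n ∧ H ∈ ℌ ∧ injc Q H = t} :=
  ⟨n ^ Q.nv, by rintro _ ⟨H, rfl, -, rfl⟩; exact injc_le_pow Q H⟩

lemma injc_le_injMax {H : RGraph r} (hH : H ∈ ℌ) : injc Q H ≤ injMax Q ℌ H.nv :=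
  le_csSup (bddAbove_injc Q ℌ _) ⟨H, rfl, hH, rfl⟩

lemma exists_injc_eq_injMax (hne : ∃ H ∈ ℌ, H.nv = n) :
    ∃ H ∈ ℌ, H.nv = n ∧ injc Q H = injMax Q ℌ n := by
  obtain ⟨H, hH, hnv⟩ := hne
  obtain ⟨H', hnv', hH', heq⟩ :=
    Nat.sSup_mem (s := {t | ∃ H : RGraph r, H.nv = n ∧ H ∈ ℌ ∧ injc Q H = t})
      ⟨_, H, hnv, hH, rfl⟩ (bddAbove_injc Q ℌ n)
  exact ⟨H', hH', hnv', heq⟩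

lemma injMax_mono (h : 𝓑 ⊆ ℌ) : injMax Q 𝓑 n ≤ injMax Q ℌ n :=
  csSup_le' fun _ ⟨_, hnv, hH, heq⟩ => heq ▸ hnv ▸ injc_le_injMax (h hH)

lemma injc_le_qdeg_add_injMax (hℌ : Hereditary ℌ) {H : RGraph r} (hH : H ∈ ℌ)
    (hnv : H.nv = n + 1) {v : ℕ} (hv : v ∈ H.verts) :
    injc Q H ≤ qdeg Q H v + injMax Q ℌ n := by
  have hdel := injc_le_injMax (Q := Q) (hℌ H hH _ (H.deleteVert_isSubgraph v))
  rw [nv_deleteVert hv, hnv, Nat.add_sub_cancel] at hdel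
  exact (injc_le_qdeg_add_injc_deleteVert Q H v).trans (Nat.add_le_add_left hdel _)

/-- Deleting a vertex of minimum `Q`-degree from an extremal graph. -/
lemma succ_mul_injMax_succ_le (hℌ : Hereditary ℌ) (hne : ∃ H ∈ ℌ, H.nv = n + 1) :
    (n + 1) * injMax Q ℌ (n + 1) ≤ Q.nv * injMax Q ℌ (n + 1) + (n + 1) * injMax Q ℌ n := by
  obtain ⟨H, hH, hnv, heq⟩ := exists_injc_eq_injMax (Q := Q) hne
  obtain ⟨v, hv, hvdeg⟩ := exists_mul_qdeg_le Q H (Finset.card_pos.1 (by rw [← nv, hnv]; omega))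
  rw [hnv, heq] at hvdeg
  calc (n + 1) * injMax Q ℌ (n + 1)
      ≤ (n + 1) * (qdeg Q H v + injMax Q ℌ n) :=
        Nat.mul_le_mul_left _ (heq ▸ injc_le_qdeg_add_injMax hℌ hH hnv hv)
    _ ≤ Q.nv * injMax Q ℌ (n + 1) + (n + 1) * injMax Q ℌ n := by
        rw [Nat.mul_add]; exact Nat.add_le_add_right hvdeg _

/-- Cloning a vertex of maximum `Q`-degree in an extremal graph. -/
lemma add_mul_injMax_le (hclone : ∀ H ∈ ℌ, ∀ u ∈ H.verts, H.clone u ∈ ℌ)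
    (hne : ∃ H ∈ ℌ, H.nv = n) (hn : 0 < n) :
    (n + Q.nv) * injMax Q ℌ n ≤ n * injMax Q ℌ (n + 1) := by
  obtain ⟨H, hH, hnv, heq⟩ := exists_injc_eq_injMax (Q := Q) hne
  obtain ⟨u, hu, hudeg⟩ := exists_mul_qdeg_ge Q H (Finset.card_pos.1 (by rw [← nv, hnv]; omega))
  rw [hnv, heq] at hudeg
  have hclone' := injc_le_injMax (Q := Q) (hclone H hH u hu)
  rw [nv_clone, hnv] at hclone'
  calc (n + Q.nv) * injMax Q ℌ n
      ≤ n * (injMax Q ℌ n + qdeg Q H u) := by rw [Nat.add_mul, Nat.mul_add]; omega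
    _ ≤ n * injMax Q ℌ (n + 1) :=
        Nat.mul_le_mul_left _ (heq ▸ (injc_add_qdeg_le_injc_clone Q H u).trans hclone')

end injMax

def IsQDegreeStable (Q : RGraph r) (ℌ 𝓑 : Set (RGraph r)) (ε : ℝ) (N₀ : ℕ) : Prop :=
  ∀ n ≥ N₀, ∀ H ∈ ℌ, H.nv = n →
    (∀ v ∈ H.verts, (1 - ε) * (Q.nv : ℝ) * (injMax Q ℌ n : ℝ) / (n : ℝ) ≤ (qdeg Q H v : ℝ)) →
    H ∈ 𝓑

def injGap (Q : RGraph r) (ℌ 𝓑 : Set (RGraph r)) (n : ℕ) : ℝ :=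
  ((injMax Q ℌ n : ℝ) - injMax Q 𝓑 n) / (n : ℝ) ^ Q.nv

section Progressive

variable {Q : RGraph r} {ℌ 𝓑 : Set (RGraph r)}

lemma IsQDegreeStable.exists_qdeg_lt {ε ε' : ℝ} {N₀ n : ℕ} (h : IsQDegreeStable Q ℌ 𝓑 ε N₀)
    (hε' : ε' ≤ ε) (hn : N₀ ≤ n) {H : RGraph r} (hH : H ∈ ℌ) (hnv : H.nv = n) (hH𝓑 : H ∉ 𝓑) :
    ∃ v ∈ H.verts, (qdeg Q H v : ℝ) < (1 - ε') * (Q.nv : ℝ) * (injMax Q ℌ n : ℝ) / (n : ℝ) := by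
  by_contra! hdeg
  refine hH𝓑 (h n hn H hH hnv fun v hv => le_trans ?_ (hdeg v hv))
  have hX : 0 ≤ (Q.nv : ℝ) * (injMax Q ℌ n : ℝ) / n := by positivity
  calc (1 - ε) * (Q.nv : ℝ) * (injMax Q ℌ n : ℝ) / n
      = (1 - ε) * ((Q.nv : ℝ) * (injMax Q ℌ n : ℝ) / n) := by ring
    _ ≤ (1 - ε') * ((Q.nv : ℝ) * (injMax Q ℌ n : ℝ) / n) :=
        mul_le_mul_of_nonneg_right (by linarith) hX
    _ = (1 - ε') * (Q.nv : ℝ) * (injMax Q ℌ n : ℝ) / n := by ring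

lemma injGap_nonneg (h𝓑 : 𝓑 ⊆ ℌ) (n : ℕ) : 0 ≤ injGap Q ℌ 𝓑 n :=
  div_nonneg (sub_nonneg.2 (Nat.cast_le.2 (injMax_mono h𝓑))) (by positivity)

lemma injMax_succ_eq_or_injGap_succ_le (hℌ : Hereditary ℌ) (h𝓑 : 𝓑 ⊆ ℌ)
    (hclone : ∀ H ∈ 𝓑, ∀ u ∈ H.verts, H.clone u ∈ 𝓑) (hne : ∀ n, ∃ H ∈ 𝓑, H.nv = n)
    {ε π : ℝ} {n : ℕ} (hε : 0 < ε) (hε1 : ε ≤ 1) (hπ : 0 < π)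
    (hlow : π / 2 * (n : ℝ) ^ Q.nv ≤ injMax Q ℌ n) (hn : 2 * (Q.nv : ℝ) ≤ ε * n)
    (hstab : ∀ H ∈ ℌ, H.nv = n + 1 → H ∉ 𝓑 → ∃ v ∈ H.verts,
      (qdeg Q H v : ℝ) < (1 - ε) * (Q.nv : ℝ) * (injMax Q ℌ (n + 1) : ℝ) / ((n + 1 : ℕ) : ℝ)) :
    injMax Q ℌ (n + 1) = injMax Q 𝓑 (n + 1) ∨
      injGap Q ℌ 𝓑 (n + 1) ≤ injGap Q ℌ 𝓑 n - ε * π / 2 ^ (Q.nv + 2) / (n + 1) := by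
  have hneℌ : ∃ H ∈ ℌ, H.nv = n + 1 :=
    let ⟨H, hH, hnv⟩ := hne (n + 1); ⟨H, h𝓑 hH, hnv⟩
  obtain ⟨H, hH, hnv, heq⟩ := exists_injc_eq_injMax (Q := Q) hneℌ
  by_cases hH𝓑 : H ∈ 𝓑
  · exact Or.inl (le_antisymm (heq ▸ hnv ▸ injc_le_injMax hH𝓑) (injMax_mono h𝓑))
  right
  obtain ⟨v, hv, hvdeg⟩ := hstab H hH hnv hH𝓑
  have hk : 1 ≤ Q.nv := by
    by_contra! hk0
    have : (qdeg Q H v : ℝ) < 0 := by simpa [Nat.lt_one_iff.1 hk0] using hvdeg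
    exact absurd this (not_lt.2 (Nat.cast_nonneg _))
  have hk' : (1 : ℝ) ≤ Q.nv := by exact_mod_cast hk
  have hn1 : (1 : ℝ) ≤ n := by nlinarith [mul_le_mul_of_nonneg_right hε1 (Nat.cast_nonneg n)]
  have hA : (injMax Q ℌ (n + 1) : ℝ) ≤ qdeg Q H v + injMax Q ℌ n := by
    exact_mod_cast heq ▸ injc_le_qdeg_add_injMax hℌ hH hnv hv
  have hB : ((n + Q.nv) * injMax Q 𝓑 n : ℝ) ≤ n * injMax Q 𝓑 (n + 1) := by
    exact_mod_cast add_mul_injMax_le hclone (hne n) (by exact_mod_cast hn1)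
  have hC : ((n + 1) * injMax Q ℌ (n + 1) : ℝ)
      ≤ Q.nv * injMax Q ℌ (n + 1) + (n + 1) * injMax Q ℌ n := by
    exact_mod_cast succ_mul_injMax_succ_le hℌ hneℌ
  push_cast at hvdeg
  have hgap := sub_le_of_injMax_recursions hk' hε hε1 hn (Nat.cast_nonneg _)
    (a := injMax Q ℌ (n + 1)) (a' := injMax Q ℌ n) (by linarith) hB (by linarith)
  have := div_pow_le_sub_of_le hk hn1 hε hπ
    (sub_nonneg.2 (Nat.cast_le.2 (injMax_mono h𝓑))) hlow hgap
  unfold injGap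
  push_cast
  exact this

theorem injMax_eventually_eq (hℌ : Hereditary ℌ) (h𝓑 : 𝓑 ⊆ ℌ)
    (hclone : ∀ H ∈ 𝓑, ∀ u ∈ H.verts, H.clone u ∈ 𝓑) (hne : ∀ n, ∃ H ∈ 𝓑, H.nv = n)
    (hπ : ∃ π : ℝ, 0 < π ∧ Filter.Tendsto
      (fun n : ℕ => (injMax Q ℌ n : ℝ) / (n : ℝ) ^ Q.nv) Filter.atTop (nhds π))
    (hstab : ∃ ε : ℝ, 0 < ε ∧ ∃ N₀ : ℕ, IsQDegreeStable Q ℌ 𝓑 ε N₀) :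
    ∀ᶠ n in Filter.atTop, injMax Q ℌ n = injMax Q 𝓑 n := by
  obtain ⟨π, hπ, hlim⟩ := hπ
  obtain ⟨ε₀, hε₀, N₀, hstab⟩ := hstab
  have hε : 0 < min ε₀ 1 := lt_min hε₀ one_pos
  obtain ⟨N, hN⟩ := Filter.eventually_atTop.1 <|
    (eventually_half_mul_pow_le hπ hlim).and <| (Filter.eventually_ge_atTop N₀).and <|
      tendsto_natCast_atTop_atTop.eventually_ge_atTop (2 * Q.nv / min ε₀ 1)
  refine eventually_of_potential_drop (p := fun n => injMax Q ℌ n = injMax Q 𝓑 n) (N := N)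
    (c := min ε₀ 1 * π / 2 ^ (Q.nv + 2)) (injGap_nonneg (Q := Q) h𝓑) (by positivity)
    (fun n h => by simp [injGap, h]) fun n hn => ?_
  obtain ⟨hlow, hN₀, hlarge⟩ := hN n hn
  exact injMax_succ_eq_or_injGap_succ_le hℌ h𝓑 hclone hne hε (min_le_right _ _) hπ hlow
    (by rwa [div_le_iff₀' hε] at hlarge)
    fun H hH hnv hH𝓑 => hstab.exists_qdeg_lt (min_le_left _ _) (by omega) hH hnv hH𝓑

end Progressive

end RGraph

theorem statement12_general (r ℓ : ℕ)
    (Q : RGraph r)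
    (F : RGraph 2) (hFc : EdgeCritical F) (hχF : chrNum F = ℓ + 1)
    (hπ : ∃ π : ℝ, 0 < π ∧ Filter.Tendsto
      (fun n : ℕ => (injExExp r Q F n : ℝ) / (n : ℝ) ^ Q.nv) Filter.atTop (nhds π))
    (hstab : ∃ ε : ℝ, 0 < ε ∧ ∃ N₀ : ℕ, ∀ n ≥ N₀, ∀ H : RGraph r, H.nv = n →
      ExpansionFree r F H →
      (∀ v ∈ H.verts,
        (1 - ε) * (Q.nv : ℝ) * (injExExp r Q F n : ℝ) / (n : ℝ) ≤ (qdeg Q H v : ℝ)) →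
      IsPartite H ℓ) :
    ∃ N₁ : ℕ, ∀ n ≥ N₁, injExExp r Q F n = injExPartite r Q ℓ n := by
  have hℓ : 0 < ℓ := by
    obtain ⟨e, he, -⟩ := hFc
    refine Nat.pos_of_ne_zero fun hℓ => RGraph.not_isPartite_one le_rfl ⟨e, he⟩ ?_
    simpa [hχF, hℓ] using RGraph.isPartite_chrNum (H := F) (by omega)
  obtain ⟨ε, hε, N₀, hstab⟩ := hstab
  exact Filter.eventually_atTop.1 <| RGraph.injMax_eventually_eq
    (RGraph.hereditary_expansionFree r F)
    (fun H hH => RGraph.IsPartite.expansionFree (by omega) hH)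
    (fun H hH u hu => RGraph.IsPartite.clone hH hu)
    (fun n => ⟨RGraph.edgeless r n, RGraph.isPartite_edgeless n hℓ, RGraph.nv_edgeless r n⟩)
    hπ ⟨ε, hε, N₀, fun n hn H hH hnv => hstab n hn H hnv hH⟩

/-- **Theorem (Statement 12).** If `π_inj(Q, H_F^r) > 0` and `H_F^r` is `Q`-degree-stable
with respect to the family of `ℓ`-partite `r`-graphs, then for large `n` the extremal
value `inj(n, Q, H_F^r)` is attained among `ℓ`-partite `r`-graphs. -/
theorem statement12 (r ℓ : ℕ) (hr : 2 ≤ r)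
    (Q : RGraph r) (hiso : NoIsolated Q)
    (F : RGraph 2) (hFc : EdgeCritical F) (hχF : chrNum F = ℓ + 1)
    (hπ : ∃ π : ℝ, 0 < π ∧ Filter.Tendsto
      (fun n : ℕ => (injExExp r Q F n : ℝ) / (n : ℝ) ^ Q.nv) Filter.atTop (nhds π))
    (hstab : ∃ ε : ℝ, 0 < ε ∧ ∃ N₀ : ℕ, ∀ n ≥ N₀, ∀ H : RGraph r, H.nv = n →
      ExpansionFree r F H →
      (∀ v ∈ H.verts,
        (1 - ε) * (Q.nv : ℝ) * (injExExp r Q F n : ℝ) / (n : ℝ) ≤ (qdeg Q H v : ℝ)) →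
      IsPartite H ℓ) :
    ∃ N₁ : ℕ, ∀ n ≥ N₁, injExExp r Q F n = injExPartite r Q ℓ n :=
  statement12_general r ℓ Q F hFc hχF hπ hstab

end
end
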